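/- arXiv:2506.05718 — 5 statements merged into one kernel-verified Lean document; each statement's English description precedes it below -/
import Mathlib

section
/- Let g : ℝ^p → [0,∞) be twice continuously differentiable and L-smooth for some L > 0, and let h : ℝ^p → [0,∞) be subdifferentiable. Let x⁰ ∈ ℝ^p with g(x⁰) ≠ 0, r > 0, χ := χ(g, x⁰, r), and let ε ∈ (0,1) and γ ∈ (0,ε) satisfy 4g(x⁰) < ((1−ε)/(1+γ))²·r²·χ. Let L₁ ≥ sup_{y ∈ B̄(x⁰,r)} ‖∇g(y)‖_∞, L₂ ≥ the supremum over B̄(x⁰,2r) of the absolute values of all second-order partial derivatives of g, and L_h ≥ sup{‖H‖₂ : H ∈ ∂h(y), y ∈ B̄(x⁰,r)}. Fix β_max > 0 with β_max · sup{‖H‖₂ : H ∈ ∂h(x⁰)} ≤ γ‖∇g(x⁰)‖₂, let β ∈ (0, β_max], and let α > 0 satisfy α·√p·(L₁ + β_max·L_h) < r and α·L₂·p < 2(ε−γ). Set δ := min{1, (1−ε)·χ·α} and define x^{(k+1)} := x^{(k)} − α(∇g(x^{(k)}) + β H_k) with H_k ∈ ∂h(x^{(k)}), starting from x^{(0)}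 = x⁰. Then for every k ≥ 1 such that β·sup{‖H‖₂ : H ∈ ∂h(x^{(j)})} ≤ γ‖∇g(x^{(j)})‖₂ for all 0 ≤ j < k, one has: x^{(1)}, …, x^{(k)} ∈ B̄(x⁰, r); g(x^{(j)}) ≤ (1−δ)^j g(x⁰) for all 0 ≤ j ≤ k; ‖∇g(x^{(j)})‖₂² ≤ 2L·g(x^{(j)}) for all 0 ≤ j ≤ k; and ‖x^{(k)} − x^{(j)}‖₂ ≤ (1−δ)^{j/2} r for all 0 ≤ j < k. Moreover, if the domination condition β·sup{‖H‖₂ : H ∈ ∂h(x^{(j)})} ≤ γ‖∇g(x^{(j)})‖₂ holds for all j ≥ 0, then the sequence converges to a limit x* ∈ B̄(x⁰, r) with g(x*) = 0 and ∇g(x*) = 0, and ‖x^{(k)} − x*‖₂ ≤ (1−δ)^{k/2} r for all k ≥ 0. -/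
/-- `z` is a subgradient of `h` at `x`. -/
def IsSubgradientAt {p : ℕ} (h : EuclideanSpace ℝ (Fin p) → ℝ)
    (z x : EuclideanSpace ℝ (Fin p)) : Prop :=
  ∀ y, h x + (inner ℝ z (y - x) : ℝ) ≤ h y

/-- The Chatterjee–Łojasiewicz constant of a differentiable function `g` (with gradient `G`)
at `x₀` with radius `r`. -/
noncomputable def chiCL {p : ℕ} (g : EuclideanSpace ℝ (Fin p) → ℝ)
    (G : EuclideanSpace ℝ (Fin p) → EuclideanSpace ℝ (Fin p))
    (x₀ : EuclideanSpace ℝ (Fin p)) (r : ℝ) : ℝ :=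
  sInf {s | ∃ y ∈ Metric.closedBall x₀ r, g y ≠ 0 ∧ s = ‖G y‖ ^ 2 / g y}

/-!
The Taylor bound coming from `L₂` together with the domination `β‖H‖ ≤ γ‖∇g‖` gives the sufficient
decrease `g(x⁺) + α(1-ε)‖∇g(x)‖² ≤ g(x)`. Inside the ball, the CL inequality `χ g ≤ ‖∇g‖²` turns it
into the contraction `g(x⁺) ≤ (1-δ) g(x)` and bounds the step length by `K (√g(x) - √g(x⁺))` with
`K = 2(1+γ)/((1-ε)√χ)`. So `√g` is a potential for the path length: the iterates stay within
`K √g(x⁰) ≤ r` of `x⁰`, where all these estimates hold, and the length of the path after `x^(j)` is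
at most `K √g(x^(j)) ≤ (1-δ)^(j/2) r`, which makes the sequence Cauchy.
-/

open Set Metric Filter Topology

theorem image_one_le_of_deriv_le_affine {φ φ' : ℝ → ℝ} {a b : ℝ}
    (hφ : ∀ t ∈ Icc (0 : ℝ) 1, HasDerivAt φ (φ' t) t)
    (hle : ∀ t ∈ Icc (0 : ℝ) 1, φ' t ≤ a + b * t) :
    φ 1 ≤ φ 0 + a + b / 2 := by
  have hB := fun t : ℝ => ((((hasDerivAt_id t).const_mul a).add
    ((hasDerivAt_pow 2 t).const_mul (b / 2))).const_add (φ 0)).congr_deriv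
      (show _ = a + b * t by simp; ring)
  have := image_le_of_deriv_right_le_deriv_boundary (a := 0) (b := 1)
    (fun t ht => (hφ t ht).continuousAt.continuousWithinAt)
    (fun t ht => (hφ t (Ico_subset_Icc_self ht)).hasDerivWithinAt) (by simp)
    (fun t _ => (hB t).continuousAt.continuousWithinAt) (fun t _ => (hB t).hasDerivWithinAt)
    (fun t ht => hle t (Ico_subset_Icc_self ht)) (right_mem_Icc.2 zero_le_one)
  norm_num at this
  linarith

theorem mul_sqrt_mul_le_two_mul_sqrt_sub_sqrt {g₀ g₁ a c χ : ℝ} (hg₁ : 0 ≤ g₁) (ha : 0 ≤ a)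
    (hc : 0 < c) (hχ : 0 < χ) (hCL : χ * g₀ ≤ a ^ 2) (hdec : g₁ + c * a ^ 2 ≤ g₀) :
    c * √χ * a ≤ 2 * (√g₀ - √g₁) := by
  have hg₀ : 0 ≤ g₀ := by nlinarith
  have hle : √g₁ ≤ √g₀ := Real.sqrt_le_sqrt (by nlinarith)
  have hs : √χ * √g₀ ≤ a := by
    rw [← Real.sqrt_mul hχ.le]; exact Real.sqrt_le_iff.2 ⟨ha, hCL⟩
  have hdiff : c * a ^ 2 ≤ 2 * √g₀ * (√g₀ - √g₁) := by
    nlinarith [Real.sq_sqrt hg₀, Real.sq_sqrt hg₁, Real.sqrt_nonneg g₁]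
  rcases (Real.sqrt_nonneg g₀).eq_or_lt with h0 | h0
  · have ha2 : a ^ 2 ≤ 0 := by rw [← h0] at hdiff; nlinarith
    have : a = 0 := pow_eq_zero_iff two_ne_zero |>.1 (ha2.antisymm (sq_nonneg a))
    rw [this, ← h0, (Real.sqrt_nonneg g₁).antisymm' (h0 ▸ hle)]
    simp
  · refine le_of_mul_le_mul_right ?_ (mul_pos (Real.sqrt_pos.2 hχ) h0)
    nlinarith [mul_le_mul_of_nonneg_left hs (mul_nonneg hc.le ha), Real.sqrt_nonneg χ]

section InnerProductSpace

variable {F : Type*} [NormedAddCommGroup F] [InnerProductSpace ℝ F]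

theorem inner_add_sub_mul_sq_norm_add_ge {a u : F} {c γ ε : ℝ} (hu : ‖u‖ ≤ γ * ‖a‖)
    (hc₀ : 0 ≤ c) (hc : c < ε - γ) (hγ : 0 ≤ γ) (hε : ε < 1) :
    (1 - ε) * ‖a‖ ^ 2 ≤ inner ℝ a (a + u) - c * ‖a + u‖ ^ 2 := by
  obtain ⟨hs₁, hs₂⟩ := abs_le.1 (abs_real_inner_le_norm a u)
  rw [inner_add_right, real_inner_self_eq_norm_sq, norm_add_sq_real]
  have hab : ‖a‖ * ‖u‖ ≤ γ * ‖a‖ ^ 2 := by nlinarith [norm_nonneg a]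
  have hbb : ‖u‖ ^ 2 ≤ γ ^ 2 * ‖a‖ ^ 2 := by nlinarith [norm_nonneg u]
  -- The right side is affine in `⟪a, u⟫ ∈ [-‖a‖‖u‖, ‖a‖‖u‖]`; the sign of its slope `1 - 2c`
  -- picks the worst endpoint.
  rcases le_total c (1 / 2) with hc2 | hc2
  · nlinarith [mul_nonneg hc₀ (sq_nonneg (γ * ‖a‖)), mul_nonneg hc₀ hγ,
      mul_nonneg (mul_nonneg hc₀ hγ) (sq_nonneg ‖a‖)]
  · nlinarith [mul_nonneg hc₀ hγ, mul_nonneg (mul_nonneg hc₀ hγ) (sq_nonneg ‖a‖),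
      mul_nonneg (mul_nonneg hγ hγ) (sq_nonneg ‖a‖)]

variable [CompleteSpace F] {g : F → ℝ} {G : F → F}

theorem Convex.image_add_le_of_gradient_lipschitzOn (hgrad : ∀ y, HasGradientAt g (G y) y)
    {s : Set F} (hs : Convex ℝ s) {M : ℝ} (hG : ∀ a ∈ s, ∀ b ∈ s, ‖G b - G a‖ ≤ M * ‖b - a‖)
    {x v : F} (hx : x ∈ s) (hxv : x + v ∈ s) :
    g (x + v) ≤ g x + inner ℝ (G x) v + M / 2 * ‖v‖ ^ 2 := by
  have hφ : ∀ t : ℝ, HasDerivAt (fun t : ℝ => g (x + t • v)) (inner ℝ (G (x + t • v)) v) t := by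
    intro t
    have hline : HasDerivAt (fun t : ℝ => x + t • v) v t := by
      simpa using ((hasDerivAt_id t).smul_const v).const_add x
    have h := (hgrad (x + t • v)).hasFDerivAt.comp_hasDerivAt t hline
    simp only [InnerProductSpace.toDual_apply_apply] at h
    exact h
  have hle : ∀ t ∈ Icc (0 : ℝ) 1,
      inner ℝ (G (x + t • v)) v ≤ inner ℝ (G x) v + M * ‖v‖ ^ 2 * t := by
    intro t ht
    have hG' := hG x hx _ (hs.add_smul_mem hx hxv ht)
    rw [add_sub_cancel_left, norm_smul, Real.norm_of_nonneg ht.1] at hG'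
    calc inner ℝ (G (x + t • v)) v
        = inner ℝ (G x) v + inner ℝ (G (x + t • v) - G x) v := by rw [inner_sub_left]; ring
      _ ≤ inner ℝ (G x) v + ‖G (x + t • v) - G x‖ * ‖v‖ := by
          gcongr; exact real_inner_le_norm _ _
      _ ≤ inner ℝ (G x) v + M * (t * ‖v‖) * ‖v‖ := by gcongr
      _ = inner ℝ (G x) v + M * ‖v‖ ^ 2 * t := by ring
  have := image_one_le_of_deriv_le_affine (fun t _ => hφ t) hle
  simp only [one_smul, zero_smul, add_zero] at this
  linarith

theorem sq_norm_gradient_le_of_lipschitz (hgrad : ∀ y, HasGradientAt g (G y) y)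
    (hg : ∀ y, 0 ≤ g y) {L : ℝ} (hL : 0 < L) (hG : ∀ a b, ‖G b - G a‖ ≤ L * ‖b - a‖) (y : F) :
    ‖G y‖ ^ 2 ≤ 2 * L * g y := by
  have h := convex_univ.image_add_le_of_gradient_lipschitzOn hgrad (fun a _ b _ => hG a b)
    (mem_univ y) (mem_univ (y + -(L⁻¹ • G y)))
  rw [inner_neg_right, real_inner_smul_right, real_inner_self_eq_norm_sq, norm_neg, norm_smul,
    Real.norm_of_nonneg (inv_nonneg.2 hL.le)] at h
  have := hg (y + -(L⁻¹ • G y))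
  generalize g (y + -(L⁻¹ • G y)) = gy' at h this
  field_simp at h
  nlinarith

theorem Convex.norm_gradient_sub_le_of_norm_fderiv_fderiv_le (hg : ContDiff ℝ 2 g)
    (hgrad : ∀ y, HasGradientAt g (G y) y) {s : Set F} (hs : Convex ℝ s) {M : ℝ}
    (hM : ∀ y ∈ s, ‖fderiv ℝ (fderiv ℝ g) y‖ ≤ M) {a b : F} (ha : a ∈ s) (hb : b ∈ s) :
    ‖G b - G a‖ ≤ M * ‖b - a‖ := by
  have hfderiv : fderiv ℝ g = fun y => InnerProductSpace.toDual ℝ F (G y) :=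
    funext fun y => (hgrad y).hasFDerivAt.fderiv
  have hdiff : Differentiable ℝ (fderiv ℝ g) :=
    (hg.fderiv_right (by norm_num)).differentiable one_ne_zero
  have := hs.norm_image_sub_le_of_norm_fderiv_le (fun y _ => hdiff y) hM ha hb
  rwa [hfderiv, ← map_sub, LinearIsometryEquiv.norm_map] at this

theorem Convex.sufficient_decrease_of_gradient_lipschitzOn (hgrad : ∀ y, HasGradientAt g (G y) y)
    {s : Set F} (hs : Convex ℝ s) {M : ℝ} (hG : ∀ a ∈ s, ∀ b ∈ s, ‖G b - G a‖ ≤ M * ‖b - a‖)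
    {y u : F} {α γ ε : ℝ} (hy : y ∈ s) (hy' : y - α • (G y + u) ∈ s) (hu : ‖u‖ ≤ γ * ‖G y‖)
    (hα : 0 ≤ α) (hM : 0 ≤ M) (hαM : α * M < 2 * (ε - γ)) (hγ : 0 ≤ γ) (hε : ε < 1) :
    g (y - α • (G y + u)) + α * (1 - ε) * ‖G y‖ ^ 2 ≤ g y := by
  rw [sub_eq_add_neg] at hy' ⊢
  have h := hs.image_add_le_of_gradient_lipschitzOn hgrad hG hy hy'
  have key := inner_add_sub_mul_sq_norm_add_ge (c := α * M / 2) hu (by positivity) (by linarith)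
    hγ hε
  rw [inner_neg_right, real_inner_smul_right, norm_neg, norm_smul, Real.norm_of_nonneg hα] at h
  nlinarith [mul_le_mul_of_nonneg_left key hα]

theorem descent_step (hgrad : ∀ y, HasGradientAt g (G y) y) (hg : ∀ y, 0 ≤ g y)
    {x₀ y u : F} {r M α γ ε χ : ℝ}
    (hG : ∀ a ∈ closedBall x₀ (2 * r), ∀ b ∈ closedBall x₀ (2 * r), ‖G b - G a‖ ≤ M * ‖b - a‖)
    (hy : y ∈ closedBall x₀ r) (hstep : ‖α • (G y + u)‖ ≤ r) (hu : ‖u‖ ≤ γ * ‖G y‖)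
    (hCL : χ * g y ≤ ‖G y‖ ^ 2) (hχ : 0 < χ) (hα : 0 < α) (hM : 0 ≤ M)
    (hαM : α * M < 2 * (ε - γ)) (hγ : 0 ≤ γ) (hε : ε < 1) :
    g (y - α • (G y + u)) ≤ (1 - min 1 ((1 - ε) * χ * α)) * g y ∧
      dist y (y - α • (G y + u)) ≤
        2 * (1 + γ) / ((1 - ε) * √χ) * (√(g y) - √(g (y - α • (G y + u)))) := by
  set y' := y - α • (G y + u) with hy'_def
  have hε' : 0 < 1 - ε := by linarith
  have hr : 0 ≤ r := (norm_nonneg _).trans hstep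
  have hdist : dist y y' = ‖α • (G y + u)‖ := by rw [hy'_def, dist_eq_norm, sub_sub_cancel]
  have hy₂ : y ∈ closedBall x₀ (2 * r) := closedBall_subset_closedBall (by linarith) hy
  have hy'₂ : y' ∈ closedBall x₀ (2 * r) := by
    rw [mem_closedBall] at hy ⊢
    linarith [dist_triangle y' y x₀, dist_comm y y']
  have hdec := (convex_closedBall x₀ (2 * r)).sufficient_decrease_of_gradient_lipschitzOn hgrad hG
    hy₂ hy'₂ hu hα.le hM hαM hγ hε
  refine ⟨?_, ?_⟩
  · nlinarith [min_le_right 1 ((1 - ε) * χ * α), mul_le_mul_of_nonneg_left hCL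
      (by positivity : 0 ≤ α * (1 - ε)), hg y]
  · have hlen : dist y y' ≤ α * ((1 + γ) * ‖G y‖) := by
      rw [hdist, norm_smul, Real.norm_of_nonneg hα.le]
      gcongr
      linarith [norm_add_le (G y) u]
    have hsqrt := mul_sqrt_mul_le_two_mul_sqrt_sub_sqrt (hg y') (norm_nonneg _)
      (by positivity : 0 < α * (1 - ε)) hχ hCL hdec
    rw [div_mul_eq_mul_div, le_div_iff₀ (by positivity)]
    nlinarith [mul_le_mul_of_nonneg_right hlen (by positivity : 0 ≤ (1 - ε) * √χ)]

end InnerProductSpace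

theorem norm_smul_add_smul_le {F : Type*} [NormedAddCommGroup F] [NormedSpace ℝ F] {a z : F}
    {α β βmax s A B : ℝ} (hα : 0 ≤ α) (hβ₀ : 0 ≤ β) (hβ : β ≤ βmax) (hs : 1 ≤ s)
    (ha : ‖a‖ ≤ s * A) (hz : ‖z‖ ≤ B) : ‖α • (a + β • z)‖ ≤ α * s * (A + βmax * B) := by
  have hβz : β * ‖z‖ ≤ βmax * B := mul_le_mul hβ hz (norm_nonneg _) (hβ₀.trans hβ)
  have hβB : 0 ≤ βmax * B := (by positivity : 0 ≤ β * ‖z‖).trans hβz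
  rw [norm_smul, Real.norm_of_nonneg hα, mul_assoc]
  gcongr
  nlinarith [norm_add_le a (β • z), norm_smul_of_nonneg hβ₀ z]

namespace EuclideanSpace

variable {n : ℕ}

theorem norm_le_sqrt_card_mul {u : EuclideanSpace ℝ (Fin n)} {C : ℝ} (hu : ∀ i, |u i| ≤ C) :
    ‖u‖ ≤ √n * C := by
  rcases n.eq_zero_or_pos with rfl | hn
  · simp [Subsingleton.elim u 0]
  have hC : 0 ≤ C := (abs_nonneg _).trans (hu ⟨0, hn⟩)
  calc ‖u‖ = √(∑ i, u i ^ 2) := by simp [EuclideanSpace.norm_eq]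
    _ ≤ √(∑ _i : Fin n, C ^ 2) := Real.sqrt_le_sqrt
        (Finset.sum_le_sum fun i _ => sq_le_sq' (abs_le.1 (hu i)).1 (abs_le.1 (hu i)).2)
    _ = √n * C := by simp [Real.sqrt_mul, Real.sqrt_sq hC]

theorem sum_abs_le_sqrt_card_mul_norm (u : EuclideanSpace ℝ (Fin n)) :
    ∑ i, |u i| ≤ √n * ‖u‖ := by
  simpa [EuclideanSpace.norm_eq] using
    Real.sum_mul_le_sqrt_mul_sqrt Finset.univ (fun _ => (1 : ℝ)) (fun i => |u i|)

theorem opNorm_le_of_abs_apply_single_le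
    (B : EuclideanSpace ℝ (Fin n) →L[ℝ] EuclideanSpace ℝ (Fin n) →L[ℝ] ℝ) {C : ℝ} (hC : 0 ≤ C)
    (hB : ∀ i j, |B (single i 1) (single j 1)| ≤ C) : ‖B‖ ≤ C * n := by
  refine B.opNorm_le_bound₂ (by positivity) fun u w => ?_
  have hexp : B u w = ∑ i, ∑ j, u i * w j * B (single i 1) (single j 1) := by
    conv_lhs => rw [← (basisFun (Fin n) ℝ).sum_repr u, ← (basisFun (Fin n) ℝ).sum_repr w]
    simp only [basisFun_apply, basisFun_repr, map_sum, map_smul, _root_.sum_apply,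
      _root_.smul_apply, smul_eq_mul, Finset.mul_sum]
    rw [Finset.sum_comm]
    exact Finset.sum_congr rfl fun _ _ => Finset.sum_congr rfl fun _ _ => by ring
  calc ‖B u w‖ ≤ ∑ i, ∑ j, |u i| * |w j| * C := by
        rw [Real.norm_eq_abs, hexp]
        refine (Finset.abs_sum_le_sum_abs _ _).trans (Finset.sum_le_sum fun i _ => ?_)
        refine (Finset.abs_sum_le_sum_abs _ _).trans (Finset.sum_le_sum fun j _ => ?_)
        rw [abs_mul, abs_mul]
        gcongr
        exact hB i j
    _ = C * ((∑ i, |u i|) * ∑ j, |w j|) := by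
        rw [Finset.sum_mul_sum, Finset.mul_sum]
        simp only [Finset.mul_sum]
        exact Finset.sum_congr rfl fun _ _ => Finset.sum_congr rfl fun _ _ => by ring
    _ ≤ C * ((√n * ‖u‖) * (√n * ‖w‖)) := by
        gcongr
        · exact sum_abs_le_sqrt_card_mul_norm u
        · exact sum_abs_le_sqrt_card_mul_norm w
    _ = C * n * ‖u‖ * ‖w‖ := by
        rw [mul_mul_mul_comm, Real.mul_self_sqrt n.cast_nonneg]; ring

theorem norm_gradient_sub_le_of_abs_iteratedFDeriv_le {g : EuclideanSpace ℝ (Fin n) → ℝ}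
    {G : EuclideanSpace ℝ (Fin n) → EuclideanSpace ℝ (Fin n)} (hg : ContDiff ℝ 2 g)
    (hgrad : ∀ y, HasGradientAt g (G y) y) {s : Set (EuclideanSpace ℝ (Fin n))}
    (hs : Convex ℝ s) {C : ℝ} (hC : 0 ≤ C)
    (h : ∀ y ∈ s, ∀ i j, |iteratedFDeriv ℝ 2 g y ![single i 1, single j 1]| ≤ C)
    {a b : EuclideanSpace ℝ (Fin n)} (ha : a ∈ s) (hb : b ∈ s) :
    ‖G b - G a‖ ≤ C * n * ‖b - a‖ :=
  hs.norm_gradient_sub_le_of_norm_fderiv_fderiv_le hg hgrad (fun y hy =>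
    opNorm_le_of_abs_apply_single_le _ hC fun i j => by
      simpa [iteratedFDeriv_two_apply] using h y hy i j) ha hb

end EuclideanSpace

theorem chiCL_fin_zero (g : EuclideanSpace ℝ (Fin 0) → ℝ)
    (G : EuclideanSpace ℝ (Fin 0) → EuclideanSpace ℝ (Fin 0)) (x₀ : EuclideanSpace ℝ (Fin 0))
    (r : ℝ) : chiCL g G x₀ r = 0 := by
  have hsub : {s | ∃ y ∈ closedBall x₀ r, g y ≠ 0 ∧ s = ‖G y‖ ^ 2 / g y} ⊆ {0} := by
    rintro s ⟨y, -, -, rfl⟩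
    simp [Subsingleton.elim (G y) 0]
  unfold chiCL
  rcases subset_singleton_iff_eq.1 hsub with h | h <;> rw [h]
  exacts [Real.sInf_empty, csInf_singleton 0]

theorem chiCL_mul_le_sq_norm {p : ℕ} {g : EuclideanSpace ℝ (Fin p) → ℝ}
    {G : EuclideanSpace ℝ (Fin p) → EuclideanSpace ℝ (Fin p)} (hg : ∀ y, 0 ≤ g y)
    {x₀ y : EuclideanSpace ℝ (Fin p)} {r : ℝ} (hy : y ∈ closedBall x₀ r) :
    chiCL g G x₀ r * g y ≤ ‖G y‖ ^ 2 := by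
  rcases (hg y).eq_or_lt with hgy | hgy
  · rw [← hgy, mul_zero]; positivity
  rw [← le_div_iff₀ hgy]
  refine csInf_le ⟨0, ?_⟩ ⟨y, hy, hgy.ne', rfl⟩
  rintro s ⟨z, -, hz, rfl⟩
  exact div_nonneg (sq_nonneg _) (hg z)

theorem mul_sqrt_le_of_four_mul_lt {g₀ r ε γ χ : ℝ} (hg₀ : 0 ≤ g₀) (hr : 0 ≤ r) (hχ : 0 < χ)
    (hε : ε < 1) (hγ : 0 ≤ γ) (h : 4 * g₀ < ((1 - ε) / (1 + γ)) ^ 2 * r ^ 2 * χ) :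
    2 * (1 + γ) / ((1 - ε) * √χ) * √g₀ ≤ r := by
  have hε' : 0 < 1 - ε := by linarith
  rw [div_mul_eq_mul_div, div_le_iff₀ (by positivity)]
  refine le_of_pow_le_pow_left₀ two_ne_zero (by positivity) ?_
  rw [div_pow, div_mul_eq_mul_div, div_mul_eq_mul_div, lt_div_iff₀ (by positivity)] at h
  calc (2 * (1 + γ) * √g₀) ^ 2 = 4 * g₀ * (1 + γ) ^ 2 := by rw [mul_pow, Real.sq_sqrt hg₀]; ring
    _ ≤ (1 - ε) ^ 2 * r ^ 2 * χ := h.le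
    _ = (r * ((1 - ε) * √χ)) ^ 2 := by rw [mul_pow, mul_pow, Real.sq_sqrt hχ.le]; ring

theorem le_pow_mul_of_le_mul {a : ℕ → ℝ} {δ : ℝ} {k j : ℕ} (hδ : δ ≤ 1) (hjk : j ≤ k)
    (h : ∀ i < k, a (i + 1) ≤ (1 - δ) * a i) : a j ≤ (1 - δ) ^ j * a 0 := by
  induction j with
  | zero => simp
  | succ j ih =>
    calc a (j + 1) ≤ (1 - δ) * a j := h j hjk
      _ ≤ (1 - δ) * ((1 - δ) ^ j * a 0) := mul_le_mul_of_nonneg_left (ih (by omega)) (by linarith)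
      _ = (1 - δ) ^ (j + 1) * a 0 := by ring

theorem mul_sqrt_le_rpow_mul {a a₀ δ K r : ℝ} {j : ℕ} (hδ : δ ≤ 1) (hK : 0 ≤ K)
    (hKr : K * √a₀ ≤ r) (ha : a ≤ (1 - δ) ^ j * a₀) : K * √a ≤ (1 - δ) ^ ((j : ℝ) / 2) * r := by
  have hδ' : 0 ≤ 1 - δ := by linarith
  calc K * √a ≤ K * (√((1 - δ) ^ j) * √a₀) := by
        rw [← Real.sqrt_mul (pow_nonneg hδ' j)]; gcongr
    _ = (1 - δ) ^ ((j : ℝ) / 2) * (K * √a₀) := by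
        rw [Real.sqrt_eq_rpow, ← Real.rpow_natCast, ← Real.rpow_mul hδ']; ring_nf
    _ ≤ (1 - δ) ^ ((j : ℝ) / 2) * r := by gcongr

section DescentSequence

variable {E : Type*} [PseudoMetricSpace E]

def IsControlledDescent (f : E → ℝ) (x : ℕ → E) (P : ℕ → Prop) (r K δ : ℝ) : Prop :=
  ∀ k, x k ∈ closedBall (x 0) r → P k → f (x (k + 1)) ≤ (1 - δ) * f (x k) ∧
    dist (x k) (x (k + 1)) ≤ K * (√(f (x k)) - √(f (x (k + 1))))

variable {f : E → ℝ} {x : ℕ → E} {P : ℕ → Prop} {r K δ : ℝ}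

theorem dist_le_sub_of_dist_succ_le {u : ℕ → ℝ} {j m : ℕ} (hjm : j ≤ m)
    (h : ∀ i, j ≤ i → i < m → dist (x i) (x (i + 1)) ≤ u i - u (i + 1)) :
    dist (x j) (x m) ≤ u j - u m :=
  calc dist (x j) (x m) ≤ ∑ i ∈ Finset.Ico j m, dist (x i) (x (i + 1)) := dist_le_Ico_sum_dist x hjm
    _ ≤ ∑ i ∈ Finset.Ico j m, (u i - u (i + 1)) :=
        Finset.sum_le_sum fun i hi => h i (Finset.mem_Ico.1 hi).1 (Finset.mem_Ico.1 hi).2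
    _ = u j - u m := by
        have := Finset.sum_Ico_sub (f := fun i => -u i) hjm
        simp only [neg_sub_neg] at this
        rw [this]

theorem dist_le_mul_sqrt_of_steps {k j : ℕ} (hK : 0 ≤ K) (hjk : j ≤ k)
    (hsteps : ∀ i < k, dist (x i) (x (i + 1)) ≤ K * (√(f (x i)) - √(f (x (i + 1))))) :
    dist (x j) (x k) ≤ K * √(f (x j)) := by
  have := dist_le_sub_of_dist_succ_le (u := fun i => K * √(f (x i))) hjk
    fun i _ hi => by simpa [mul_sub] using hsteps i hi
  nlinarith [Real.sqrt_nonneg (f (x k))]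

theorem IsControlledDescent.step_bounds {k : ℕ} (hstep : IsControlledDescent f x P r K δ)
    (hK : 0 ≤ K) (hKr : K * √(f (x 0)) ≤ r) (hP : ∀ j < k, P j) :
    ∀ j < k, f (x (j + 1)) ≤ (1 - δ) * f (x j) ∧
      dist (x j) (x (j + 1)) ≤ K * (√(f (x j)) - √(f (x (j + 1)))) := by
  induction k with
  | zero => simp
  | succ k ih =>
    have ih := ih fun j hj => hP j (by omega)
    intro j hj
    rcases Nat.lt_succ_iff_lt_or_eq.1 hj with hj | rfl
    · exact ih j hj
    refine hstep j (mem_closedBall'.2 ?_) (hP j hj)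
    exact (dist_le_mul_sqrt_of_steps hK (Nat.zero_le j) fun i hi => (ih i hi).2).trans hKr

theorem IsControlledDescent.rate_of_forall_lt {k : ℕ} (hstep : IsControlledDescent f x P r K δ)
    (hδ : δ ≤ 1) (hK : 0 ≤ K) (hKr : K * √(f (x 0)) ≤ r) (hP : ∀ j < k, P j) :
    (∀ j ≤ k, x j ∈ closedBall (x 0) r) ∧ (∀ j ≤ k, f (x j) ≤ (1 - δ) ^ j * f (x 0)) ∧
      ∀ j ≤ k, dist (x j) (x k) ≤ (1 - δ) ^ ((j : ℝ) / 2) * r := by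
  have hsteps := hstep.step_bounds hK hKr hP
  have hdecay : ∀ j ≤ k, f (x j) ≤ (1 - δ) ^ j * f (x 0) :=
    fun j hj => le_pow_mul_of_le_mul (a := fun i => f (x i)) hδ hj fun i hi => (hsteps i hi).1
  refine ⟨fun j hj => mem_closedBall'.2 ?_, hdecay, fun j hj => ?_⟩
  · exact (dist_le_mul_sqrt_of_steps hK (Nat.zero_le j)
      fun i hi => (hsteps i (by omega)).2).trans hKr
  · exact (dist_le_mul_sqrt_of_steps hK hj fun i hi => (hsteps i hi).2).trans
      (mul_sqrt_le_rpow_mul hδ hK hKr (hdecay j hj))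

theorem IsControlledDescent.tendsto [CompleteSpace E] (hstep : IsControlledDescent f x P r K δ)
    (hf : ∀ y, 0 ≤ f y) (hδ₀ : 0 < δ) (hδ : δ ≤ 1) (hK : 0 ≤ K) (hKr : K * √(f (x 0)) ≤ r)
    (hP : ∀ j, P j) :
    ∃ xs, Tendsto x atTop (𝓝 xs) ∧ Tendsto (fun k => f (x k)) atTop (𝓝 0) ∧
      ∀ k, dist (x k) xs ≤ (1 - δ) ^ ((k : ℝ) / 2) * r := by
  have hdesc := fun k => hstep.rate_of_forall_lt (k := k) hδ hK hKr fun j _ => hP j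
  have hrate : Tendsto (fun k : ℕ => (1 - δ) ^ ((k : ℝ) / 2) * r) atTop (𝓝 0) := by
    have := (tendsto_rpow_atTop_of_base_lt_one (1 - δ) (by linarith) (by linarith)).comp
      (tendsto_natCast_atTop_atTop.atTop_div_const (two_pos (α := ℝ)))
    simpa using this.mul_const r
  obtain ⟨xs, hxs⟩ := cauchySeq_tendsto_of_complete <|
    cauchySeq_of_le_tendsto_0' _ (fun j k hjk => (hdesc k).2.2 j hjk) hrate
  refine ⟨xs, hxs, ?_, fun k => ?_⟩
  · refine squeeze_zero (fun k => hf (x k)) (fun k => (hdesc k).2.1 k le_rfl) ?_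
    simpa using (tendsto_pow_atTop_nhds_zero_of_lt_one (by linarith) (by linarith)).mul_const
      (f (x 0))
  · exact le_of_tendsto (tendsto_const_nhds.dist hxs)
      (eventually_atTop.2 ⟨k, fun m hm => (hdesc m).2.2 k hm⟩)

end DescentSequence

theorem regularized_descent_convergence_under_CL_general
    {p : ℕ} (g h : EuclideanSpace ℝ (Fin p) → ℝ)
    (G : EuclideanSpace ℝ (Fin p) → EuclideanSpace ℝ (Fin p))
    (hgC2 : ContDiff ℝ 2 g) (hg_nonneg : ∀ x, 0 ≤ g x)
    (hgrad : ∀ x, HasGradientAt g (G x) x)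
    (L : ℝ) (hL : 0 < L) (hsmooth : ∀ x y, ‖G y - G x‖ ≤ L * ‖y - x‖)
    (x₀ : EuclideanSpace ℝ (Fin p)) (r : ℝ) (hr : 0 < r)
    (χ : ℝ) (hχ : χ = chiCL g G x₀ r)
    (ε γ : ℝ) (hε1 : ε < 1) (hγ0 : 0 < γ)
    (hCL : 4 * g x₀ < ((1 - ε) / (1 + γ)) ^ 2 * r ^ 2 * χ)
    (L₁ L₂ Lh : ℝ)
    (hL₁ : ∀ y ∈ Metric.closedBall x₀ r, ∀ i, |G y i| ≤ L₁)
    (hL₂ : ∀ y ∈ Metric.closedBall x₀ (2 * r), ∀ i j,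
      |iteratedFDeriv ℝ 2 g y ![EuclideanSpace.single i 1, EuclideanSpace.single j 1]| ≤ L₂)
    (hLh : ∀ y ∈ Metric.closedBall x₀ r, ∀ z, IsSubgradientAt h z y → ‖z‖ ≤ Lh)
    (βmax : ℝ)
    (β : ℝ) (hβ0 : 0 < β) (hβ : β ≤ βmax)
    (α : ℝ) (hα0 : 0 < α)
    (hα1 : α * Real.sqrt p * (L₁ + βmax * Lh) < r) (hα2 : α * L₂ * p < 2 * (ε - γ))
    (δ : ℝ) (hδ : δ = min 1 ((1 - ε) * χ * α))
    (x H : ℕ → EuclideanSpace ℝ (Fin p)) (hx0 : x 0 = x₀)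
    (hH : ∀ k, IsSubgradientAt h (H k) (x k))
    (hrec : ∀ k, x (k + 1) = x k - α • (G (x k) + β • H k)) :
    (∀ k : ℕ, 1 ≤ k →
      (∀ j, j < k → ∀ z, IsSubgradientAt h z (x j) → β * ‖z‖ ≤ γ * ‖G (x j)‖) →
      (∀ j, 1 ≤ j → j ≤ k → x j ∈ Metric.closedBall x₀ r) ∧
      (∀ j, j ≤ k → g (x j) ≤ (1 - δ) ^ j * g x₀) ∧
      (∀ j, j ≤ k → ‖G (x j)‖ ^ 2 ≤ 2 * L * g (x j)) ∧
      (∀ j, j < k → ‖x k - x j‖ ≤ (1 - δ) ^ ((j : ℝ) / 2) * r)) ∧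
    ((∀ j : ℕ, ∀ z, IsSubgradientAt h z (x j) → β * ‖z‖ ≤ γ * ‖G (x j)‖) →
      ∃ xstar ∈ Metric.closedBall x₀ r,
        Filter.Tendsto x Filter.atTop (nhds xstar) ∧
        g xstar = 0 ∧ G xstar = 0 ∧
        ∀ k : ℕ, ‖x k - xstar‖ ≤ (1 - δ) ^ ((k : ℝ) / 2) * r) := by
  subst hx0
  have hχ₀ : 0 < χ :=
    pos_of_mul_pos_right ((mul_nonneg zero_le_four (hg_nonneg _)).trans_lt hCL) (by positivity)
  have hp : 0 < p := Nat.pos_of_ne_zero <| by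
    rintro rfl; exact hχ₀.ne' (hχ.trans (chiCL_fin_zero g G _ r))
  have hε' : 0 < 1 - ε := by linarith
  have hδ₀ : 0 < δ := hδ ▸ lt_min one_pos (by positivity)
  have hδ₁ : δ ≤ 1 := hδ ▸ min_le_left _ _
  have hL₂₀ : 0 ≤ L₂ :=
    (abs_nonneg _).trans (hL₂ _ (mem_closedBall_self (by positivity)) ⟨0, hp⟩ ⟨0, hp⟩)
  have hstep : IsControlledDescent g x (fun k => β * ‖H k‖ ≤ γ * ‖G (x k)‖) r
      (2 * (1 + γ) / ((1 - ε) * √χ)) δ := fun k hk hdom => by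
    rw [hrec, hδ]
    refine descent_step (M := L₂ * p) hgrad hg_nonneg (fun a ha b hb =>
      EuclideanSpace.norm_gradient_sub_le_of_abs_iteratedFDeriv_le hgC2 hgrad
        (convex_closedBall _ _) hL₂₀ hL₂ ha hb) hk ?_ (by rwa [norm_smul_of_nonneg hβ0.le])
      (hχ ▸ chiCL_mul_le_sq_norm hg_nonneg hk) hχ₀ hα0 (by positivity) (by rwa [← mul_assoc])
      hγ0.le hε1
    exact (norm_smul_add_smul_le hα0.le hβ0.le hβ (Real.one_le_sqrt.2 (mod_cast hp))
      (EuclideanSpace.norm_le_sqrt_card_mul (hL₁ _ hk)) (hLh _ hk _ (hH k))).trans hα1.le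
  have hK : 0 ≤ 2 * (1 + γ) / ((1 - ε) * √χ) := by positivity
  have hKr := mul_sqrt_le_of_four_mul_lt (hg_nonneg (x 0)) hr.le hχ₀ hε1 hγ0.le hCL
  have hgrad_sq := sq_norm_gradient_le_of_lipschitz hgrad hg_nonneg hL hsmooth
  refine ⟨fun k _ hdom => ?_, fun hdom => ?_⟩
  · obtain ⟨hball, hdecay, hdist⟩ :=
      hstep.rate_of_forall_lt hδ₁ hK hKr fun j hj => hdom j hj _ (hH j)
    exact ⟨fun j _ hj => hball j hj, hdecay, fun j _ => hgrad_sq _,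
      fun j hj => by simpa [dist_eq_norm'] using hdist j hj.le⟩
  · obtain ⟨xs, hxs, hg0, hdist⟩ :=
      hstep.tendsto hg_nonneg hδ₀ hδ₁ hK hKr fun j => hdom j _ (hH j)
    have hgxs : g xs = 0 := tendsto_nhds_unique ((hgC2.continuous.tendsto xs).comp hxs) hg0
    refine ⟨xs, mem_closedBall'.2 (by simpa using hdist 0), hxs, hgxs, ?_,
      fun k => by simpa [dist_eq_norm] using hdist k⟩
    simpa [hgxs] using hgrad_sq xs

/-- convergence of fixed-step subgradient descent on `g + βh` under the CL
condition, as long as the gradient of `g` dominates the subgradients of `βh`. -/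
theorem regularized_descent_convergence_under_CL
    {p : ℕ} (g h : EuclideanSpace ℝ (Fin p) → ℝ)
    (G : EuclideanSpace ℝ (Fin p) → EuclideanSpace ℝ (Fin p))
    (hgC2 : ContDiff ℝ 2 g) (hg_nonneg : ∀ x, 0 ≤ g x)
    (hgrad : ∀ x, HasGradientAt g (G x) x)
    (L : ℝ) (hL : 0 < L) (hsmooth : ∀ x y, ‖G y - G x‖ ≤ L * ‖y - x‖)
    (hh_nonneg : ∀ x, 0 ≤ h x)
    (hh_sub : ∀ x, ∃ z, IsSubgradientAt h z x)
    (x₀ : EuclideanSpace ℝ (Fin p)) (hgx₀ : g x₀ ≠ 0) (r : ℝ) (hr : 0 < r)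
    (χ : ℝ) (hχ : χ = chiCL g G x₀ r)
    (ε γ : ℝ) (hε0 : 0 < ε) (hε1 : ε < 1) (hγ0 : 0 < γ) (hγε : γ < ε)
    (hCL : 4 * g x₀ < ((1 - ε) / (1 + γ)) ^ 2 * r ^ 2 * χ)
    (L₁ L₂ Lh : ℝ)
    (hL₁ : ∀ y ∈ Metric.closedBall x₀ r, ∀ i, |G y i| ≤ L₁)
    (hL₂ : ∀ y ∈ Metric.closedBall x₀ (2 * r), ∀ i j,
      |iteratedFDeriv ℝ 2 g y ![EuclideanSpace.single i 1, EuclideanSpace.single j 1]| ≤ L₂)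
    (hLh : ∀ y ∈ Metric.closedBall x₀ r, ∀ z, IsSubgradientAt h z y → ‖z‖ ≤ Lh)
    (βmax : ℝ) (hβmax : 0 < βmax)
    (hβmax_dom : ∀ z, IsSubgradientAt h z x₀ → βmax * ‖z‖ ≤ γ * ‖G x₀‖)
    (β : ℝ) (hβ0 : 0 < β) (hβ : β ≤ βmax)
    (α : ℝ) (hα0 : 0 < α)
    (hα1 : α * Real.sqrt p * (L₁ + βmax * Lh) < r) (hα2 : α * L₂ * p < 2 * (ε - γ))
    (δ : ℝ) (hδ : δ = min 1 ((1 - ε) * χ * α))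
    (x H : ℕ → EuclideanSpace ℝ (Fin p)) (hx0 : x 0 = x₀)
    (hH : ∀ k, IsSubgradientAt h (H k) (x k))
    (hrec : ∀ k, x (k + 1) = x k - α • (G (x k) + β • H k)) :
    (∀ k : ℕ, 1 ≤ k →
      (∀ j, j < k → ∀ z, IsSubgradientAt h z (x j) → β * ‖z‖ ≤ γ * ‖G (x j)‖) →
      (∀ j, 1 ≤ j → j ≤ k → x j ∈ Metric.closedBall x₀ r) ∧
      (∀ j, j ≤ k → g (x j) ≤ (1 - δ) ^ j * g x₀) ∧
      (∀ j, j ≤ k → ‖G (x j)‖ ^ 2 ≤ 2 * L * g (x j)) ∧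
      (∀ j, j < k → ‖x k - x j‖ ≤ (1 - δ) ^ ((j : ℝ) / 2) * r)) ∧
    ((∀ j : ℕ, ∀ z, IsSubgradientAt h z (x j) → β * ‖z‖ ≤ γ * ‖G (x j)‖) →
      ∃ xstar ∈ Metric.closedBall x₀ r,
        Filter.Tendsto x Filter.atTop (nhds xstar) ∧
        g xstar = 0 ∧ G xstar = 0 ∧
        ∀ k : ℕ, ‖x k - xstar‖ ≤ (1 - δ) ^ ((k : ℝ) / 2) * r) :=
  regularized_descent_convergence_under_CL_general g h G hgC2 hg_nonneg hgrad L hL hsmooth x₀ r hr χ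
    hχ ε γ hε1 hγ0 hCL L₁ L₂ Lh hL₁ hL₂ hLh βmax β hβ0 hβ α hα0 hα1 hα2 δ hδ x H hx0 hH hrec
end

section
/- In the setting of the regularized gradient descent theorem under the CL condition — g : ℝ^p → [0,∞) twice continuously differentiable and L-smooth, h : ℝ^p → [0,∞) subdifferentiable, x⁰ with g(x⁰) ≠ 0, r > 0, χ := χ(g, x⁰, r), ε ∈ (0,1) and γ ∈ (0,ε) with 4g(x⁰) < ((1−ε)/(1+γ))²r²χ, bounds L₁ ≥ sup_{B̄(x⁰,r)}‖∇g‖_∞, L₂ ≥ sup over B̄(x⁰,2r) of the absolute second partials of g, L_h ≥ sup{‖H‖₂ : H ∈ ∂h(y), y ∈ B̄(x⁰,r)}, β ∈ (0, β_max] with β_max·sup{‖H‖₂ : H ∈ ∂h(x⁰)} ≤ γ‖∇g(x⁰)‖₂, step size α > 0 with α√p(L₁ + β_max L_h) < r, αL₂p < 2(ε−γ) and additionally α(1+γ)L < 1, δ := min{1, (1−ε)χα}, and iterates x^{(k+1)} = x^{(k)} − α(∇g(x^{(k)}) + βH_k), H_k ∈ ∂h(x^{(k)}), x^{(0)} = x⁰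 — set τ := 1 − (1+γ)αL ∈ (0,1) and suppose γ‖∇g(x⁰)‖₂ ≥ βL_h/τ^k for some integer k ≥ 1. Then for every 0 ≤ j ≤ k: γ‖∇g(x^{(j)})‖₂ ≥ βL_h/τ^{k−j} and β·sup{‖H‖₂ : H ∈ ∂h(x^{(j)})} ≤ γ‖∇g(x^{(j)})‖₂; moreover ‖∇g(x^{(k+1)})‖₂ ≥ τβL_h. As a consequence: x^{(1)}, …, x^{(k)} ∈ B̄(x⁰, r); g(x^{(j)}) ≤ (1−δ)^j g(x⁰) and ‖∇g(x^{(j)})‖₂² ≤ 2L·g(x^{(j)}) for all 0 ≤ j ≤ k; and ‖x^{(k)} − x^{(j)}‖₂² ≤ (1−δ)^j r² for all 0 ≤ j < k. -/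
open Set Metric

section RealLine

theorem le_add_deriv_add_of_deriv_le_add {f f' : ℝ → ℝ} (hf : ∀ t, HasDerivAt f (f' t) t)
    {Q : ℝ} (hQ : ∀ t ∈ Icc (0 : ℝ) 1, f' t ≤ f' 0 + Q * t) : f 1 ≤ f 0 + f' 0 + Q / 2 := by
  have hrem : ∀ t, HasDerivAt (fun s => f s - f' 0 * s - Q / 2 * s ^ 2)
      (f' t - f' 0 - Q * t) t := fun t => by
    refine (((hf t).fun_sub ((hasDerivAt_id' t).const_mul (f' 0))).fun_sub
      ((hasDerivAt_pow 2 t).const_mul (Q / 2))).congr_deriv ?_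
    norm_num
    ring
  have := (convex_Icc (0 : ℝ) 1).image_sub_le_mul_sub_of_deriv_le (C := 0)
    (fun t _ => (hrem t).continuousAt.continuousWithinAt)
    (fun t _ => (hrem t).differentiableAt.differentiableWithinAt)
    (fun t ht => by rw [(hrem t).deriv]; linarith [hQ t (interior_subset ht)])
    0 (left_mem_Icc.2 zero_le_one) 1 (right_mem_Icc.2 zero_le_one) zero_le_one
  norm_num at this
  linarith

theorem mul_le_two_mul_sqrt_sub_sqrt {a b κ c N : ℝ} (hb : 0 ≤ b) (hκ : 0 ≤ κ) (hc : 0 ≤ c)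
    (hN : c * √a ≤ N) (hab : b ≤ a - κ * N ^ 2) : κ * c * N ≤ 2 * (√a - √b) := by
  have hba : b ≤ a := by nlinarith
  have hA := Real.sq_sqrt (hb.trans hba)
  have hB := Real.sq_sqrt hb
  have hBA : √b ≤ √a := Real.sqrt_le_sqrt hba
  have hcA : 0 ≤ c * √a := by positivity
  -- `κ N² ≤ a - b = (√a - √b)(√a + √b) ≤ 2 √a (√a - √b)`, then `c √a ≤ N`
  have h1 : κ * N ^ 2 ≤ 2 * √a * (√a - √b) := by nlinarith [Real.sqrt_nonneg b]
  rcases (hcA.trans hN).eq_or_lt with hN0 | hNpos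
  · rw [← hN0]; nlinarith
  · have : κ * c * N * N ≤ 2 * (√a - √b) * N := by nlinarith
    exact le_of_mul_le_mul_right this hNpos

theorem two_mul_div_mul_sqrt_mul_sqrt_lt {a r χ ε γ : ℝ} (ha : 0 ≤ a) (hr : 0 ≤ r) (hχ : 0 < χ)
    (hε : ε < 1) (hγ : 0 ≤ γ) (h : 4 * a < ((1 - ε) / (1 + γ)) ^ 2 * r ^ 2 * χ) :
    2 * (1 + γ) / ((1 - ε) * √χ) * √a < r := by
  have hε' : 0 < 1 - ε := by linarith
  rw [div_mul_eq_mul_div, div_lt_iff₀ (by positivity)]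
  refine lt_of_pow_lt_pow_left₀ 2 (by positivity) ?_
  rw [div_pow, div_mul_eq_mul_div, div_mul_eq_mul_div, lt_div_iff₀ (by positivity)] at h
  calc (2 * (1 + γ) * √a) ^ 2 = 4 * a * (1 + γ) ^ 2 := by
        rw [mul_pow, Real.sq_sqrt ha]; ring
    _ < (1 - ε) ^ 2 * r ^ 2 * χ := h
    _ = (r * ((1 - ε) * √χ)) ^ 2 := by rw [mul_pow, mul_pow, Real.sq_sqrt hχ.le]; ring

end RealLine

section Smooth

variable {E : Type*} [NormedAddCommGroup E]

theorem hasDerivAt_comp_add_smul [NormedSpace ℝ E] {F : Type*} [NormedAddCommGroup F]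
    [NormedSpace ℝ F] {f : E → F} {f' : E → E →L[ℝ] F} (hf : ∀ z, HasFDerivAt f (f' z) z)
    (y d : E) (t : ℝ) : HasDerivAt (fun s : ℝ => f (y + s • d)) (f' (y + t • d) d) t := by
  have hline : HasDerivAt (fun s : ℝ => y + s • d) d t := by
    simpa using ((hasDerivAt_id t).smul_const d).const_add y
  exact (hf _).comp_hasDerivAt t hline

theorem le_add_fderiv_add_of_fderiv_fderiv_le [NormedSpace ℝ E] {g : E → ℝ}
    (hg : ContDiff ℝ 2 g) (y d : E) {Q : ℝ}
    (hQ : ∀ t ∈ Icc (0 : ℝ) 1, fderiv ℝ (fderiv ℝ g) (y + t • d) d d ≤ Q) :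
    g (y + d) ≤ g y + fderiv ℝ g y d + Q / 2 := by
  have hg1 : ∀ z, HasFDerivAt g (fderiv ℝ g z) z := fun z =>
    (hg.differentiable (by norm_num) z).hasFDerivAt
  have hg2 : ∀ z, HasFDerivAt (fderiv ℝ g) (fderiv ℝ (fderiv ℝ g) z) z := fun z =>
    ((hg.fderiv_right (m := 1) (by norm_num)).differentiable (by norm_num) z).hasFDerivAt
  have hderiv2 : ∀ t, HasDerivAt (fun s : ℝ => fderiv ℝ g (y + s • d) d)
      (fderiv ℝ (fderiv ℝ g) (y + t • d) d d) t := fun t => by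
    simpa using (hasDerivAt_comp_add_smul hg2 y d t).clm_apply (hasDerivAt_const t d)
  have h := le_add_deriv_add_of_deriv_le_add (Q := Q) (hasDerivAt_comp_add_smul hg1 y d)
    fun t ht => by
      have := (convex_Icc 0 t).image_sub_le_mul_sub_of_deriv_le (C := Q)
        (fun s _ => (hderiv2 s).continuousAt.continuousWithinAt)
        (fun s _ => (hderiv2 s).differentiableAt.differentiableWithinAt)
        (fun s hs => by
          rw [(hderiv2 s).deriv]
          exact hQ s ⟨(interior_subset hs).1, (interior_subset hs).2.trans ht.2⟩)
        0 (left_mem_Icc.2 ht.1) t (right_mem_Icc.2 ht.1) ht.1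
      simp only [zero_smul, add_zero] at this ⊢
      linarith
  simpa using h

variable [InnerProductSpace ℝ E]

theorem one_sub_mul_norm_sq_le_inner_sub {u w : E} {a γ ε : ℝ} (hw : ‖w‖ ≤ γ * ‖u‖)
    (ha : a ≤ 2 * (ε - γ)) (hγ : 0 ≤ γ) (hγε : γ ≤ ε) (hε : ε < 1) :
    (1 - ε) * ‖u‖ ^ 2 ≤ inner ℝ u (u + w) - a / 2 * ‖u + w‖ ^ 2 := by
  have hcs : |inner ℝ u w| ≤ γ * ‖u‖ ^ 2 :=
    (abs_real_inner_le_norm u w).trans (by nlinarith [norm_nonneg u])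
  have hs : ‖w‖ ^ 2 ≤ γ ^ 2 * ‖u‖ ^ 2 := by
    rw [← mul_pow]; exact pow_le_pow_left₀ (norm_nonneg w) hw 2
  rw [inner_add_right, real_inner_self_eq_norm_sq, norm_add_sq_real]
  obtain ⟨ht₁, ht₂⟩ := abs_le.1 hcs
  set N := ‖u‖ ^ 2
  set t := inner ℝ u w
  set s := ‖w‖ ^ 2
  have hN : 0 ≤ N := sq_nonneg _
  rcases le_total a 0 with ha0 | ha0
  · nlinarith [norm_add_sq_real u w, sq_nonneg ‖u + w‖]
  rcases le_total a 1 with ha1 | ha1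
  · nlinarith [mul_nonneg (by linarith : 0 ≤ 2 - 2 * a) (by linarith : 0 ≤ t + γ * N),
      mul_nonneg ha0 (by linarith : 0 ≤ γ ^ 2 * N - s),
      mul_nonneg (mul_nonneg hN (sq_nonneg (1 - γ))) (by linarith : 0 ≤ 2 * (ε - γ) - a),
      mul_nonneg (mul_nonneg (mul_nonneg (by linarith : 0 ≤ ε - γ) hγ)
        (by linarith : 0 ≤ 2 - γ)) hN]
  · nlinarith [mul_nonneg (by linarith : 0 ≤ 2 * a - 2) (by linarith : 0 ≤ γ * N - t),
      mul_nonneg ha0 (by linarith : 0 ≤ γ ^ 2 * N - s),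
      mul_nonneg (mul_nonneg hN (sq_nonneg (1 + γ))) (by linarith : 0 ≤ 2 * (ε - γ) - a),
      mul_nonneg (mul_nonneg hγ hN) (by linarith : 0 ≤ 1 - ε),
      mul_nonneg (mul_nonneg (sq_nonneg γ) hN) (by linarith : 0 ≤ 2 - ε),
      mul_nonneg (pow_nonneg hγ 3) hN]

variable [CompleteSpace E]

theorem le_add_inner_add_of_lipschitz_gradient {g : E → ℝ} {G : E → E}
    (hgrad : ∀ x, HasGradientAt g (G x) x) {L : ℝ} (hG : ∀ x y, ‖G y - G x‖ ≤ L * ‖y - x‖)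
    (y d : E) : g (y + d) ≤ g y + inner ℝ (G y) d + L / 2 * ‖d‖ ^ 2 := by
  have hline : ∀ t, HasDerivAt (fun s : ℝ => g (y + s • d)) (inner ℝ (G (y + t • d)) d) t :=
    hasDerivAt_comp_add_smul (fun z => (hgrad z).hasFDerivAt) y d
  have h := le_add_deriv_add_of_deriv_le_add (Q := L * ‖d‖ ^ 2) hline fun t ht => by
    have hcs := real_inner_le_norm (G (y + t • d) - G y) d
    have hlip : ‖G (y + t • d) - G y‖ ≤ L * (t * ‖d‖) := by
      simpa [norm_smul, abs_of_nonneg ht.1] using hG y (y + t • d)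
    simp only [zero_smul, add_zero]
    rw [inner_sub_left] at hcs
    nlinarith [norm_nonneg d]
  simp only [one_smul, zero_smul, add_zero] at h
  linarith

theorem norm_sq_le_two_mul_of_lipschitz_gradient {g : E → ℝ} {G : E → E}
    (hgrad : ∀ x, HasGradientAt g (G x) x) (hg : ∀ x, 0 ≤ g x) {L : ℝ}
    (hG : ∀ x y, ‖G y - G x‖ ≤ L * ‖y - x‖) (hL : 0 < L) (y : E) :
    ‖G y‖ ^ 2 ≤ 2 * L * g y := by
  have h := le_add_inner_add_of_lipschitz_gradient hgrad hG y (-L⁻¹ • G y)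
  rw [inner_smul_right, real_inner_self_eq_norm_sq, norm_smul, norm_neg, norm_inv,
    Real.norm_of_nonneg hL.le] at h
  have h0 := hg (y + -L⁻¹ • G y)
  have : g y + -L⁻¹ * ‖G y‖ ^ 2 + L / 2 * (L⁻¹ * ‖G y‖) ^ 2 = g y - ‖G y‖ ^ 2 / (2 * L) := by
    field_simp; ring
  rw [this] at h
  have := (div_le_iff₀ (by positivity : (0:ℝ) < 2 * L)).1
    (by linarith : ‖G y‖ ^ 2 / (2 * L) ≤ g y)
  linarith

end Smooth

section Sequences

variable {α : Type*} [PseudoMetricSpace α] {x : ℕ → α} {K : ℝ} {ψ : ℕ → ℝ}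

theorem dist_le_mul_sub_of_dist_succ_le {m n : ℕ} (hmn : m ≤ n)
    (hx : ∀ i, m ≤ i → i < n → dist (x i) (x (i + 1)) ≤ K * (ψ i - ψ (i + 1))) :
    dist (x m) (x n) ≤ K * (ψ m - ψ n) := by
  refine (dist_le_Ico_sum_of_dist_le hmn fun {i} hi hin => hx i hi hin).trans_eq ?_
  rw [← Finset.mul_sum, ← neg_sub, ← Finset.sum_Ico_sub _ hmn, ← Finset.sum_neg_distrib]
  simp only [neg_sub]

theorem mem_closedBall_of_dist_succ_le {r : ℝ} {j : ℕ} (hK : 0 ≤ K) (hψ : 0 ≤ ψ j)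
    (hKr : K * ψ 0 ≤ r) (hx : ∀ i < j, dist (x i) (x (i + 1)) ≤ K * (ψ i - ψ (i + 1))) :
    x j ∈ closedBall (x 0) r := by
  rw [mem_closedBall, dist_comm]
  have := dist_le_mul_sub_of_dist_succ_le (Nat.zero_le j) fun i _ hi => hx i hi
  nlinarith [mul_nonneg hK hψ]

theorem div_pow_le_and_dist_succ_le_of_step {M : ℕ → ℝ} {r τ C : ℝ} {k : ℕ} (hτ0 : 0 < τ)
    (hτ1 : τ ≤ 1) (hC : 0 ≤ C) (hK : 0 ≤ K) (hψ : ∀ j, 0 ≤ ψ j) (hKr : K * ψ 0 ≤ r)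
    (hstep : ∀ j, x j ∈ closedBall (x 0) r → C ≤ M j →
      dist (x j) (x (j + 1)) ≤ K * (ψ j - ψ (j + 1)) ∧ τ * M j ≤ M (j + 1))
    (hM0 : C / τ ^ k ≤ M 0) :
    ∀ j ≤ k, C / τ ^ (k - j) ≤ M j ∧ ∀ i < j, dist (x i) (x (i + 1)) ≤ K * (ψ i - ψ (i + 1)) := by
  intro j
  induction j with
  | zero => exact fun _ => ⟨by simpa using hM0, by simp⟩
  | succ j ih =>
    intro hj
    obtain ⟨hMj, hsteps⟩ := ih (by omega)
    have hball := mem_closedBall_of_dist_succ_le hK (hψ j) hKr hsteps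
    have hCM : C ≤ M j :=
      (le_div_self hC (pow_pos hτ0 _) (pow_le_one₀ hτ0.le hτ1)).trans hMj
    obtain ⟨hdist, hτM⟩ := hstep j hball hCM
    refine ⟨?_, fun i hi => ?_⟩
    · have hkj : k - j = k - (j + 1) + 1 := by omega
      calc C / τ ^ (k - (j + 1)) = τ * (C / τ ^ (k - j)) := by
            rw [hkj, pow_succ]; field_simp
        _ ≤ τ * M j := mul_le_mul_of_nonneg_left hMj hτ0.le
        _ ≤ M (j + 1) := hτM
    · rcases Nat.lt_succ_iff_lt_or_eq.1 hi with hi | rfl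
      exacts [hsteps i hi, hdist]

theorem dist_sq_le_of_dist_succ_le {u : ℕ → ℝ} {r q : ℝ} {j k : ℕ} (hjk : j ≤ k)
    (hu : ∀ i, 0 ≤ u i) (hK : 0 ≤ K) (hKr : K * √(u 0) ≤ r) (hq : 0 ≤ q)
    (hdecay : u j ≤ q ^ j * u 0)
    (hx : ∀ i, j ≤ i → i < k → dist (x i) (x (i + 1)) ≤ K * (√(u i) - √(u (i + 1)))) :
    dist (x j) (x k) ^ 2 ≤ q ^ j * r ^ 2 := by
  have hd : dist (x j) (x k) ≤ K * √(u j) := by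
    have := dist_le_mul_sub_of_dist_succ_le hjk hx
    nlinarith [mul_nonneg hK (Real.sqrt_nonneg (u k))]
  calc dist (x j) (x k) ^ 2 ≤ (K * √(u j)) ^ 2 := pow_le_pow_left₀ dist_nonneg hd 2
    _ = K ^ 2 * u j := by rw [mul_pow, Real.sq_sqrt (hu j)]
    _ ≤ K ^ 2 * (q ^ j * u 0) := by gcongr
    _ = q ^ j * (K * √(u 0)) ^ 2 := by rw [mul_pow, Real.sq_sqrt (hu 0)]; ring
    _ ≤ q ^ j * r ^ 2 := by gcongr

end Sequences

section Euclidean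

theorem EuclideanSpace.norm_le_sqrt_card_mul_s3 {ι : Type*} [Fintype ι] {v : EuclideanSpace ℝ ι}
    {M : ℝ} (hv : ∀ i, |v i| ≤ M) : ‖v‖ ≤ √(Fintype.card ι) * M := by
  rcases isEmpty_or_nonempty ι with hι | ⟨⟨i₀⟩⟩
  · simp [EuclideanSpace.norm_eq]
  have hM : 0 ≤ M := (abs_nonneg _).trans (hv i₀)
  have hsq : ‖v‖ ^ 2 ≤ (√(Fintype.card ι) * M) ^ 2 := by
    rw [EuclideanSpace.norm_sq_eq, mul_pow, Real.sq_sqrt (Nat.cast_nonneg _)]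
    calc ∑ i, ‖v i‖ ^ 2 ≤ ∑ _i : ι, M ^ 2 := by
          gcongr with i; simpa using hv i
      _ = _ := by simp
  exact (pow_le_pow_iff_left₀ (norm_nonneg _) (by positivity) two_ne_zero).1 hsq

theorem EuclideanSpace.apply_apply_self_le {ι : Type*} [Fintype ι] [DecidableEq ι]
    (B : EuclideanSpace ℝ ι →L[ℝ] EuclideanSpace ℝ ι →L[ℝ] ℝ) {M : ℝ}
    (hB : ∀ i j, |B (EuclideanSpace.single i 1) (EuclideanSpace.single j 1)| ≤ M)
    (d : EuclideanSpace ℝ ι) : B d d ≤ Fintype.card ι * M * ‖d‖ ^ 2 := by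
  have hd : d = ∑ i, d i • EuclideanSpace.single i (1 : ℝ) := by
    simpa using ((EuclideanSpace.basisFun ι ℝ).sum_repr d).symm
  have hexp : B d d = ∑ i, ∑ j, d i * d j * B (EuclideanSpace.single i 1)
      (EuclideanSpace.single j 1) := by
    conv_lhs => rw [hd]
    simp only [map_sum, map_smul, FunLike.coe_sum, Finset.sum_apply, FunLike.coe_smul,
      Pi.smul_apply, smul_eq_mul, Finset.mul_sum]
    rw [Finset.sum_comm]
    simp only [mul_assoc, mul_left_comm]
  have hterm : ∀ i j, d i * d j * B (EuclideanSpace.single i 1) (EuclideanSpace.single j 1)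
      ≤ (d i ^ 2 + d j ^ 2) / 2 * M := fun i j => by
    nlinarith [sq_nonneg (d i - d j), sq_nonneg (d i + d j), abs_le.1 (hB i j)]
  calc B d d ≤ ∑ i, ∑ j, (d i ^ 2 + d j ^ 2) / 2 * M := by
        rw [hexp]; exact Finset.sum_le_sum fun i _ => Finset.sum_le_sum fun j _ => hterm i j
    _ = Fintype.card ι * M * ‖d‖ ^ 2 := by
        rw [EuclideanSpace.norm_sq_eq]
        simp only [Real.norm_eq_abs, sq_abs, ← Finset.sum_mul, add_div, Finset.sum_add_distrib,
          ← Finset.sum_div, Finset.sum_const, Finset.card_univ, nsmul_eq_mul, ← Finset.mul_sum]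
        ring

variable {p : ℕ}

theorem EuclideanSpace.le_add_inner_add_of_iteratedFDeriv_two_le
    {g : EuclideanSpace ℝ (Fin p) → ℝ} {G : EuclideanSpace ℝ (Fin p) → EuclideanSpace ℝ (Fin p)}
    (hg : ContDiff ℝ 2 g) (hgrad : ∀ x, HasGradientAt g (G x) x) {y d : EuclideanSpace ℝ (Fin p)}
    {M : ℝ} (hM : ∀ t ∈ Icc (0 : ℝ) 1, ∀ i j, |iteratedFDeriv ℝ 2 g (y + t • d)
      ![EuclideanSpace.single i 1, EuclideanSpace.single j 1]| ≤ M) :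
    g (y + d) ≤ g y + inner ℝ (G y) d + p * M / 2 * ‖d‖ ^ 2 := by
  have h := le_add_fderiv_add_of_fderiv_fderiv_le hg y d (Q := p * M * ‖d‖ ^ 2) fun t ht => by
    simpa using EuclideanSpace.apply_apply_self_le _
      (fun i j => by simpa [iteratedFDeriv_two_apply] using hM t ht i j) d
  rw [(hgrad y).hasFDerivAt.fderiv, InnerProductSpace.toDual_apply_apply] at h
  linarith

theorem norm_smul_add_smul_le_s3 {v H : EuclideanSpace ℝ (Fin p)} {α β βmax L₁ Lh : ℝ}
    (hα : 0 ≤ α) (hβ0 : 0 ≤ β) (hβ : β ≤ βmax) (hv : ∀ i, |v i| ≤ L₁) (hH : ‖H‖ ≤ Lh) :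
    ‖α • (v + β • H)‖ ≤ α * √p * (L₁ + βmax * Lh) := by
  have hcoord : ∀ i, |(v + β • H) i| ≤ L₁ + βmax * Lh := fun i => by
    have hHi : |H i| ≤ Lh := by simpa using (PiLp.norm_apply_le H i).trans hH
    have : β * |H i| ≤ βmax * Lh :=
      mul_le_mul hβ hHi (abs_nonneg _) (hβ0.trans hβ)
    simp only [PiLp.add_apply, PiLp.smul_apply, smul_eq_mul]
    calc |v i + β * H i| ≤ |v i| + |β * H i| := abs_add_le _ _
      _ = |v i| + β * |H i| := by rw [abs_mul, abs_of_nonneg hβ0]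
      _ ≤ L₁ + βmax * Lh := add_le_add (hv i) this
  rw [norm_smul, Real.norm_of_nonneg hα, mul_assoc]
  gcongr
  simpa using EuclideanSpace.norm_le_sqrt_card_mul_s3 hcoord

theorem chiCL_mul_le_norm_sq {g : EuclideanSpace ℝ (Fin p) → ℝ}
    {G : EuclideanSpace ℝ (Fin p) → EuclideanSpace ℝ (Fin p)} (hg : ∀ x, 0 ≤ g x)
    {x₀ y : EuclideanSpace ℝ (Fin p)} {r : ℝ} (hy : y ∈ closedBall x₀ r) :
    chiCL g G x₀ r * g y ≤ ‖G y‖ ^ 2 := by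
  rcases (hg y).eq_or_lt with hgy | hgy
  · rw [← hgy, mul_zero]; positivity
  have hbdd : BddBelow {s | ∃ y ∈ closedBall x₀ r, g y ≠ 0 ∧ s = ‖G y‖ ^ 2 / g y} :=
    ⟨0, by rintro s ⟨z, -, -, rfl⟩; exact div_nonneg (sq_nonneg _) (hg z)⟩
  have := csInf_le hbdd ⟨y, hy, hgy.ne', rfl⟩
  rwa [← le_div_iff₀ hgy]

theorem regularized_step_bounds {g : EuclideanSpace ℝ (Fin p) → ℝ}
    {G : EuclideanSpace ℝ (Fin p) → EuclideanSpace ℝ (Fin p)} (hgC2 : ContDiff ℝ 2 g)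
    (hg_nonneg : ∀ x, 0 ≤ g x) (hgrad : ∀ x, HasGradientAt g (G x) x) {L : ℝ} (hL : 0 ≤ L)
    (hsmooth : ∀ x y, ‖G y - G x‖ ≤ L * ‖y - x‖) {x₀ : EuclideanSpace ℝ (Fin p)} {r χ : ℝ}
    (hχ : 0 < χ) (hCL : ∀ y ∈ closedBall x₀ r, χ * g y ≤ ‖G y‖ ^ 2) {L₂ : ℝ}
    (hL₂ : ∀ y ∈ closedBall x₀ (2 * r), ∀ i j,
      |iteratedFDeriv ℝ 2 g y ![EuclideanSpace.single i 1, EuclideanSpace.single j 1]| ≤ L₂)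
    {ε γ α : ℝ} (hγ0 : 0 ≤ γ) (hγε : γ ≤ ε) (hε1 : ε < 1) (hα0 : 0 < α)
    (hα2 : α * L₂ * p ≤ 2 * (ε - γ)) {y w : EuclideanSpace ℝ (Fin p)} (hy : y ∈ closedBall x₀ r)
    (hw : ‖w‖ ≤ γ * ‖G y‖) (hr : ‖α • (G y + w)‖ ≤ r) :
    dist y (y - α • (G y + w)) ≤
        2 * (1 + γ) / ((1 - ε) * √χ) * (√(g y) - √(g (y - α • (G y + w)))) ∧
      (1 - (1 + γ) * α * L) * ‖G y‖ ≤ ‖G (y - α • (G y + w))‖ ∧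
      g (y - α • (G y + w)) ≤ (1 - (1 - ε) * χ * α) * g y := by
  set y' := y - α • (G y + w)
  have hε : 0 < 1 - ε := by linarith
  have hlen : ‖y' - y‖ ≤ α * (1 + γ) * ‖G y‖ := by
    rw [show y' - y = -(α • (G y + w)) by simp [y'], norm_neg, norm_smul,
      Real.norm_of_nonneg hα0.le]
    nlinarith [norm_add_le (G y) w]
  have hdesc : g y' ≤ g y - (1 - ε) * α * ‖G y‖ ^ 2 := by
    have hseg : ∀ t ∈ Icc (0 : ℝ) 1, y + t • -(α • (G y + w)) ∈ closedBall x₀ (2 * r) := by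
      intro t ht
      rw [mem_closedBall, dist_eq_norm, add_sub_right_comm, two_mul]
      refine (norm_add_le _ _).trans (add_le_add (mem_closedBall_iff_norm.1 hy) ?_)
      rw [norm_smul, norm_neg, Real.norm_of_nonneg ht.1]
      nlinarith [mul_le_mul_of_nonneg_right ht.2 (norm_nonneg (α • (G y + w)))]
    have htaylor := EuclideanSpace.le_add_inner_add_of_iteratedFDeriv_two_le hgC2 hgrad
      fun t ht => hL₂ _ (hseg t ht)
    have hgain := one_sub_mul_norm_sq_le_inner_sub hw hα2 hγ0 hγε hε1
    rw [← sub_eq_add_neg, inner_neg_right, inner_smul_right, norm_neg, norm_smul,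
      Real.norm_of_nonneg hα0.le] at htaylor
    nlinarith [mul_le_mul_of_nonneg_left hgain hα0.le]
  have hN : √χ * √(g y) ≤ ‖G y‖ := by
    rw [← Real.sqrt_mul hχ.le, ← Real.sqrt_sq (norm_nonneg (G y))]
    exact Real.sqrt_le_sqrt (hCL y hy)
  have hsqrt := mul_le_two_mul_sqrt_sub_sqrt (hg_nonneg y') (by positivity)
    (Real.sqrt_nonneg χ) hN hdesc
  refine ⟨?_, ?_, ?_⟩
  · rw [dist_comm, dist_eq_norm, div_mul_eq_mul_div, le_div_iff₀ (by positivity)]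
    calc ‖y' - y‖ * ((1 - ε) * √χ) ≤ α * (1 + γ) * ‖G y‖ * ((1 - ε) * √χ) := by gcongr
      _ = (1 + γ) * ((1 - ε) * α * √χ * ‖G y‖) := by ring
      _ ≤ (1 + γ) * (2 * (√(g y) - √(g y'))) := by gcongr
      _ = 2 * (1 + γ) * (√(g y) - √(g y')) := by ring
  · have := norm_sub_norm_le (G y) (G y')
    rw [norm_sub_rev] at this
    nlinarith [hsmooth y y', mul_le_mul_of_nonneg_left hlen hL]
  · nlinarith [mul_le_mul_of_nonneg_left (hCL y hy) (by positivity : 0 ≤ (1 - ε) * α)]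

end Euclidean

theorem memorization_time_under_CL_general
    {p : ℕ} (g h : EuclideanSpace ℝ (Fin p) → ℝ)
    (G : EuclideanSpace ℝ (Fin p) → EuclideanSpace ℝ (Fin p))
    (hgC2 : ContDiff ℝ 2 g) (hg_nonneg : ∀ x, 0 ≤ g x)
    (hgrad : ∀ x, HasGradientAt g (G x) x)
    (L : ℝ) (hL : 0 < L) (hsmooth : ∀ x y, ‖G y - G x‖ ≤ L * ‖y - x‖)
    (x₀ : EuclideanSpace ℝ (Fin p)) (r : ℝ) (hr : 0 < r)
    (χ : ℝ) (hχ : χ = chiCL g G x₀ r)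
    (ε γ : ℝ) (hε1 : ε < 1) (hγ0 : 0 < γ) (hγε : γ < ε)
    (hCL : 4 * g x₀ < ((1 - ε) / (1 + γ)) ^ 2 * r ^ 2 * χ)
    (L₁ L₂ Lh : ℝ)
    (hL₁ : ∀ y ∈ Metric.closedBall x₀ r, ∀ i, |G y i| ≤ L₁)
    (hL₂ : ∀ y ∈ Metric.closedBall x₀ (2 * r), ∀ i j,
      |iteratedFDeriv ℝ 2 g y ![EuclideanSpace.single i 1, EuclideanSpace.single j 1]| ≤ L₂)
    (hLh : ∀ y ∈ Metric.closedBall x₀ r, ∀ z, IsSubgradientAt h z y → ‖z‖ ≤ Lh)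
    (βmax : ℝ)
    (β : ℝ) (hβ0 : 0 < β) (hβ : β ≤ βmax)
    (α : ℝ) (hα0 : 0 < α)
    (hα1 : α * Real.sqrt p * (L₁ + βmax * Lh) < r) (hα2 : α * L₂ * p < 2 * (ε - γ))
    (hα3 : α * (1 + γ) * L < 1)
    (δ : ℝ) (hδ : δ = min 1 ((1 - ε) * χ * α))
    (τ : ℝ) (hτ : τ = 1 - (1 + γ) * α * L)
    (x H : ℕ → EuclideanSpace ℝ (Fin p)) (hx0 : x 0 = x₀)
    (hH : ∀ k, IsSubgradientAt h (H k) (x k))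
    (hrec : ∀ k, x (k + 1) = x k - α • (G (x k) + β • H k))
    (k : ℕ)
    (hdom0 : γ * ‖G x₀‖ ≥ β * Lh / τ ^ k) :
    (0 < τ ∧ τ < 1) ∧
    (∀ j, j ≤ k → γ * ‖G (x j)‖ ≥ β * Lh / τ ^ (k - j)) ∧
    (∀ j, j ≤ k → ∀ z, IsSubgradientAt h z (x j) → β * ‖z‖ ≤ γ * ‖G (x j)‖) ∧
    ‖G (x (k + 1))‖ ≥ τ * β * Lh ∧
    (∀ j, 1 ≤ j → j ≤ k → x j ∈ Metric.closedBall x₀ r) ∧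
    (∀ j, j ≤ k → g (x j) ≤ (1 - δ) ^ j * g x₀) ∧
    (∀ j, j ≤ k → ‖G (x j)‖ ^ 2 ≤ 2 * L * g (x j)) ∧
    (∀ j, j < k → ‖x k - x j‖ ^ 2 ≤ (1 - δ) ^ j * r ^ 2) := by
  have hτ0 : 0 < τ := by rw [hτ]; linarith
  have hτ1 : τ < 1 := by rw [hτ]; nlinarith [mul_pos (mul_pos hα0 hγ0) hL]
  have hχ0 : 0 < χ := by
    by_contra! hχ0
    nlinarith [hg_nonneg x₀, mul_nonpos_of_nonneg_of_nonpos
      (by positivity : 0 ≤ ((1 - ε) / (1 + γ)) ^ 2 * r ^ 2) hχ0]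
  have hCLball : ∀ y ∈ closedBall x₀ r, χ * g y ≤ ‖G y‖ ^ 2 := fun y hy =>
    hχ ▸ chiCL_mul_le_norm_sq hg_nonneg hy
  have hLh0 : 0 ≤ Lh := (norm_nonneg _).trans (hLh x₀ (mem_closedBall_self hr.le) _ (hx0 ▸ hH 0))
  set K := 2 * (1 + γ) / ((1 - ε) * √χ)
  have hK0 : 0 ≤ K := div_nonneg (by linarith) (mul_nonneg (by linarith) (Real.sqrt_nonneg χ))
  have hKr : K * √(g (x 0)) ≤ r := hx0 ▸
    (two_mul_div_mul_sqrt_mul_sqrt_lt (hg_nonneg x₀) hr.le hχ0 hε1 hγ0.le hCL).le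
  have hstep : ∀ j, x j ∈ closedBall x₀ r → β * Lh ≤ γ * ‖G (x j)‖ →
      dist (x j) (x (j + 1)) ≤ K * (√(g (x j)) - √(g (x (j + 1)))) ∧
        τ * ‖G (x j)‖ ≤ ‖G (x (j + 1))‖ ∧ g (x (j + 1)) ≤ (1 - δ) * g (x j) := by
    intro j hj hdom
    have hHj := hLh _ hj _ (hH j)
    have hw : ‖β • H j‖ ≤ γ * ‖G (x j)‖ := by
      rw [norm_smul, Real.norm_of_nonneg hβ0.le]
      nlinarith
    have hshort := (norm_smul_add_smul_le_s3 hα0.le hβ0.le hβ (hL₁ _ hj) hHj).trans hα1.le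
    obtain ⟨hdist, hgrowth, hdecay⟩ := regularized_step_bounds hgC2 hg_nonneg hgrad hL.le
      hsmooth hχ0 hCLball hL₂ hγ0.le hγε.le hε1 hα0 hα2.le hj hw hshort
    rw [hrec j, hτ]
    refine ⟨hdist, hgrowth, hdecay.trans ?_⟩
    gcongr
    · exact hg_nonneg _
    · exact hδ ▸ min_le_right _ _
  have hinv := div_pow_le_and_dist_succ_le_of_step (M := fun j => γ * ‖G (x j)‖)
    (ψ := fun j => √(g (x j))) hτ0 hτ1.le (mul_nonneg hβ0.le hLh0) hK0
    (fun _ => Real.sqrt_nonneg _) hKr (fun j hj hC => by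
      obtain ⟨hdist, hgrowth, -⟩ := hstep j (hx0 ▸ hj) hC
      exact ⟨hdist, by nlinarith⟩) (by simpa [hx0] using hdom0)
  have hdom : ∀ j ≤ k, β * Lh ≤ γ * ‖G (x j)‖ := fun j hj =>
    (le_div_self (mul_nonneg hβ0.le hLh0) (pow_pos hτ0 _) (pow_le_one₀ hτ0.le hτ1.le)).trans
      (hinv j hj).1
  have hball : ∀ j ≤ k, x j ∈ closedBall x₀ r := fun j hj =>
    hx0 ▸ mem_closedBall_of_dist_succ_le hK0 (Real.sqrt_nonneg _) hKr (hinv j hj).2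
  have hδ1 : 0 ≤ 1 - δ := by rw [hδ]; linarith [min_le_left 1 ((1 - ε) * χ * α)]
  have hdecay : ∀ j ≤ k, g (x j) ≤ (1 - δ) ^ j * g x₀ := fun j hj => hx0 ▸
    le_geom (u := fun i => g (x i)) hδ1 j
      fun i hi => (hstep i (hball i (by omega)) (hdom i (by omega))).2.2
  refine ⟨⟨hτ0, hτ1⟩, fun j hj => (hinv j hj).1, fun j hj z hz => ?_, ?_,
    fun j _ hj => hball j hj, hdecay,
    fun j _ => norm_sq_le_two_mul_of_lipschitz_gradient hgrad hg_nonneg hsmooth hL _,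
    fun j hj => ?_⟩
  · nlinarith [hLh _ (hball j hj) z hz, hdom j hj]
  · calc τ * β * Lh = τ * (β * Lh) := by ring
      _ ≤ τ * ‖G (x k)‖ := by
        gcongr
        nlinarith [hdom k le_rfl, norm_nonneg (G (x k))]
      _ ≤ ‖G (x (k + 1))‖ := (hstep k (hball k le_rfl) (hdom k le_rfl)).2.1
  · rw [← dist_eq_norm, dist_comm]
    exact dist_sq_le_of_dist_succ_le hj.le (fun i => hg_nonneg (x i)) hK0 hKr hδ1
      (hx0 ▸ hdecay j hj.le) fun i _ hi => (hinv k le_rfl).2 i hi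

/-- memorization time of regularized fixed-step subgradient descent under the
CL condition: if `γ‖∇g(x⁰)‖ ≥ βL_h/τᵏ`, the gradient dominates the regularizer for the
first `k` steps, and the memorization conclusions hold up to step `k`. -/
theorem memorization_time_under_CL
    {p : ℕ} (g h : EuclideanSpace ℝ (Fin p) → ℝ)
    (G : EuclideanSpace ℝ (Fin p) → EuclideanSpace ℝ (Fin p))
    (hgC2 : ContDiff ℝ 2 g) (hg_nonneg : ∀ x, 0 ≤ g x)
    (hgrad : ∀ x, HasGradientAt g (G x) x)
    (L : ℝ) (hL : 0 < L) (hsmooth : ∀ x y, ‖G y - G x‖ ≤ L * ‖y - x‖)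
    (hh_nonneg : ∀ x, 0 ≤ h x)
    (hh_sub : ∀ x, ∃ z, IsSubgradientAt h z x)
    (x₀ : EuclideanSpace ℝ (Fin p)) (hgx₀ : g x₀ ≠ 0) (r : ℝ) (hr : 0 < r)
    (χ : ℝ) (hχ : χ = chiCL g G x₀ r)
    (ε γ : ℝ) (hε0 : 0 < ε) (hε1 : ε < 1) (hγ0 : 0 < γ) (hγε : γ < ε)
    (hCL : 4 * g x₀ < ((1 - ε) / (1 + γ)) ^ 2 * r ^ 2 * χ)
    (L₁ L₂ Lh : ℝ)
    (hL₁ : ∀ y ∈ Metric.closedBall x₀ r, ∀ i, |G y i| ≤ L₁)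
    (hL₂ : ∀ y ∈ Metric.closedBall x₀ (2 * r), ∀ i j,
      |iteratedFDeriv ℝ 2 g y ![EuclideanSpace.single i 1, EuclideanSpace.single j 1]| ≤ L₂)
    (hLh : ∀ y ∈ Metric.closedBall x₀ r, ∀ z, IsSubgradientAt h z y → ‖z‖ ≤ Lh)
    (βmax : ℝ) (hβmax : 0 < βmax)
    (hβmax_dom : ∀ z, IsSubgradientAt h z x₀ → βmax * ‖z‖ ≤ γ * ‖G x₀‖)
    (β : ℝ) (hβ0 : 0 < β) (hβ : β ≤ βmax)
    (α : ℝ) (hα0 : 0 < α)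
    (hα1 : α * Real.sqrt p * (L₁ + βmax * Lh) < r) (hα2 : α * L₂ * p < 2 * (ε - γ))
    (hα3 : α * (1 + γ) * L < 1)
    (δ : ℝ) (hδ : δ = min 1 ((1 - ε) * χ * α))
    (τ : ℝ) (hτ : τ = 1 - (1 + γ) * α * L)
    (x H : ℕ → EuclideanSpace ℝ (Fin p)) (hx0 : x 0 = x₀)
    (hH : ∀ k, IsSubgradientAt h (H k) (x k))
    (hrec : ∀ k, x (k + 1) = x k - α • (G (x k) + β • H k))
    (k : ℕ) (hk : 1 ≤ k)
    (hdom0 : γ * ‖G x₀‖ ≥ β * Lh / τ ^ k) :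
    (0 < τ ∧ τ < 1) ∧
    (∀ j, j ≤ k → γ * ‖G (x j)‖ ≥ β * Lh / τ ^ (k - j)) ∧
    (∀ j, j ≤ k → ∀ z, IsSubgradientAt h z (x j) → β * ‖z‖ ≤ γ * ‖G (x j)‖) ∧
    ‖G (x (k + 1))‖ ≥ τ * β * Lh ∧
    (∀ j, 1 ≤ j → j ≤ k → x j ∈ Metric.closedBall x₀ r) ∧
    (∀ j, j ≤ k → g (x j) ≤ (1 - δ) ^ j * g x₀) ∧
    (∀ j, j ≤ k → ‖G (x j)‖ ^ 2 ≤ 2 * L * g (x j)) ∧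
    (∀ j, j < k → ‖x k - x j‖ ^ 2 ≤ (1 - δ) ^ j * r ^ 2) :=
  memorization_time_under_CL_general g h G hgC2 hg_nonneg hgrad L hL hsmooth x₀ r hr χ hχ ε γ hε1
    hγ0 hγε hCL L₁ L₂ Lh hL₁ hL₂ hLh βmax β hβ0 hβ α hα0 hα1 hα2 hα3 δ hδ τ hτ x H hx0 hH hrec k
    hdom0
end

section
/- Let g : ℝ^p → [0,∞) be convex and differentiable, h : ℝ^p → [0,∞) convex, β > 0, f := g + βh, and assume Θ_f ≠ ∅. Fix α > 0 and define x^{(t+1)} := x^{(t)} − α F_t where F_t := ∇g(x^{(t)}) + β H_t with H_t ∈ ∂h(x^{(t)}) (so F_t ∈ ∂f(x^{(t)})). Then for all integers 0 ≤ t₁ < t₂: min_{t₁ ≤ t ≤ t₂} (f(x^{(t)}) − f*) ≤ [dist²(x^{(t₁)}, Θ_f) + (t₂ − t₁)·α²·max_{t₁ ≤ t ≤ t₂} ‖F_t‖₂²] / (2(t₂ − t₁)α). Moreover, if Θ_f ∩ Θ_g ≠ ∅, then β·min_{t₁ ≤ t ≤ t₂}(h(x^{(t)}) − h_g*) ≤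 min_{t₁ ≤ t ≤ t₂}(f(x^{(t)}) − f*), so the same right-hand side also bounds β·min_{t₁ ≤ t ≤ t₂}(h(x^{(t)}) − h_g*). -/
theorem ConvexOn.add_fderiv_sub_le {E : Type*} [NormedAddCommGroup E] [NormedSpace ℝ E]
    {s : Set E} {g : E → ℝ} {g' : E →L[ℝ] ℝ} {x y : E} (hg : ConvexOn ℝ s g)
    (hx : x ∈ s) (hy : y ∈ s) (hg' : HasFDerivAt g g' x) :
    g x + g' (y - x) ≤ g y := by
  set ℓ : ℝ →ᵃ[ℝ] E := AffineMap.lineMap x y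
  have hderiv : HasDerivAt (g ∘ ℓ) (g' (y - x)) 0 :=
    HasFDerivAt.comp_hasDerivAt (0 : ℝ) (by simpa [ℓ] using hg') AffineMap.hasDerivAt_lineMap
  have hslope := (hg.comp_affineMap ℓ).le_slope_of_hasDerivAt (x := 0) (y := 1)
    (by simpa [ℓ] using hx) (by simpa [ℓ] using hy) one_pos hderiv
  simpa [slope_def_field, ℓ, le_sub_iff_add_le'] using hslope

theorem HasGradientAt.isSubgradientAt {p : ℕ} {g : EuclideanSpace ℝ (Fin p) → ℝ}
    {G x : EuclideanSpace ℝ (Fin p)} (hg : ConvexOn ℝ Set.univ g) (hG : HasGradientAt g G x) :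
    IsSubgradientAt g G x := fun y => by
  simpa using hg.add_fderiv_sub_le (Set.mem_univ x) (Set.mem_univ y) hG.hasFDerivAt

section Subgradient

variable {p : ℕ} {f g h : EuclideanSpace ℝ (Fin p) → ℝ} {a b x : EuclideanSpace ℝ (Fin p)}

theorem IsSubgradientAt.add_smul (hg : IsSubgradientAt g a x) (hh : IsSubgradientAt h b x)
    {β : ℝ} (hβ : 0 ≤ β) : IsSubgradientAt (fun y => g y + β * h y) (a + β • b) x := fun y => by
  have hβh := mul_le_mul_of_nonneg_left (hh y) hβ
  simp only [inner_add_left, real_inner_smul_left]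
  linarith [hg y]

theorem IsSubgradientAt.norm_sub_smul_sub_sq_le (hf : IsSubgradientAt f a x) {α : ℝ}
    (hα : 0 ≤ α) (z : EuclideanSpace ℝ (Fin p)) :
    ‖x - α • a - z‖ ^ 2 ≤ ‖x - z‖ ^ 2 - 2 * α * (f x - f z) + α ^ 2 * ‖a‖ ^ 2 := by
  have hinner : inner ℝ a (z - x) ≤ f z - f x := by linarith [hf z]
  have hexpand :
      ‖x - α • a - z‖ ^ 2 = ‖x - z‖ ^ 2 + 2 * α * inner ℝ a (z - x) + α ^ 2 * ‖a‖ ^ 2 := by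
    rw [sub_right_comm, norm_sub_sq_real, norm_smul, inner_smul_right, ← neg_sub z x,
      inner_neg_left, real_inner_comm, Real.norm_eq_abs, mul_pow, sq_abs]
    ring
  rw [hexpand]
  nlinarith [mul_le_mul_of_nonneg_left hinner hα]

end Subgradient

theorem Finset.sum_Ico_le_sub_of_le_sub {a b : ℕ → ℝ} (hab : ∀ t, a (t + 1) ≤ a t - b t)
    {m n : ℕ} (hmn : m ≤ n) : ∑ t ∈ Finset.Ico m n, b t ≤ a m - a n := by
  induction n, hmn using Nat.le_induction with
  | base => simp
  | succ n hmn ih =>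
    rw [Finset.sum_Ico_succ_top hmn]
    linarith [hab n]

theorem Metric.le_infDist_sq {α : Type*} [PseudoMetricSpace α] {s : Set α} {x : α} {c : ℝ}
    (hs : s.Nonempty) (hc : ∀ z ∈ s, c ≤ dist x z ^ 2) : c ≤ Metric.infDist x s ^ 2 := by
  have : √c ≤ Metric.infDist x s :=
    (Metric.le_infDist hs).2 fun z hz => (Real.sqrt_le_left dist_nonneg).2 (hc z hz)
  exact (Real.sqrt_le_left Metric.infDist_nonneg).1 this

section SubgradientMethod

variable {p : ℕ} {f : EuclideanSpace ℝ (Fin p) → ℝ} {x F : ℕ → EuclideanSpace ℝ (Fin p)} {α : ℝ}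

theorem subgradient_method_sum_gap_le (hα : 0 ≤ α) (hF : ∀ t, IsSubgradientAt f (F t) (x t))
    (hrec : ∀ t, x (t + 1) = x t - α • F t) (z : EuclideanSpace ℝ (Fin p)) {m n : ℕ}
    (hmn : m ≤ n) :
    2 * α * ∑ t ∈ Finset.Ico m n, (f (x t) - f z) ≤
      ‖x m - z‖ ^ 2 + α ^ 2 * ∑ t ∈ Finset.Ico m n, ‖F t‖ ^ 2 := by
  have htelescope := Finset.sum_Ico_le_sub_of_le_sub
    (a := fun t => ‖x t - z‖ ^ 2) (b := fun t => 2 * α * (f (x t) - f z) - α ^ 2 * ‖F t‖ ^ 2)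
    (fun t => by
      rw [hrec]
      linarith [(hF t).norm_sub_smul_sub_sq_le hα z]) hmn
  rw [Finset.sum_sub_distrib, ← Finset.mul_sum, ← Finset.mul_sum] at htelescope
  linarith [sq_nonneg ‖x n - z‖]

theorem subgradient_method_inf'_gap_le (hα : 0 ≤ α) (hF : ∀ t, IsSubgradientAt f (F t) (x t))
    (hrec : ∀ t, x (t + 1) = x t - α • F t) (z : EuclideanSpace ℝ (Fin p)) {m n : ℕ}
    (hmn : m ≤ n) :
    2 * ((n : ℝ) - m) * α *
        (Finset.Icc m n).inf' (Finset.nonempty_Icc.mpr hmn) (fun t => f (x t) - f z) ≤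
      ‖x m - z‖ ^ 2 + ((n : ℝ) - m) * α ^ 2 *
        (Finset.Icc m n).sup' (Finset.nonempty_Icc.mpr hmn) (fun t => ‖F t‖ ^ 2) := by
  have hcard : ((Finset.Ico m n).card : ℝ) = (n : ℝ) - m := by
    rw [Nat.card_Ico, Nat.cast_sub hmn]
  have hinf := Finset.card_nsmul_le_sum (Finset.Ico m n) (fun t => f (x t) - f z)
    ((Finset.Icc m n).inf' (Finset.nonempty_Icc.mpr hmn) (fun t => f (x t) - f z))
    fun t ht => Finset.inf'_le _ (Finset.Ico_subset_Icc_self ht)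
  have hsup := Finset.sum_le_card_nsmul (Finset.Ico m n) (fun t => ‖F t‖ ^ 2)
    ((Finset.Icc m n).sup' (Finset.nonempty_Icc.mpr hmn) (fun t => ‖F t‖ ^ 2))
    fun t ht => Finset.le_sup' (fun t => ‖F t‖ ^ 2) (Finset.Ico_subset_Icc_self ht)
  rw [nsmul_eq_mul, hcard] at hinf hsup
  have hsum := subgradient_method_sum_gap_le hα hF hrec z hmn
  nlinarith [mul_le_mul_of_nonneg_left hinf (by positivity : 0 ≤ 2 * α),
    mul_le_mul_of_nonneg_left hsup (sq_nonneg α)]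

theorem subgradient_method_inf'_gap_le_infDist (hα : 0 < α)
    (hF : ∀ t, IsSubgradientAt f (F t) (x t)) (hrec : ∀ t, x (t + 1) = x t - α • F t)
    {S : Set (EuclideanSpace ℝ (Fin p))} (hS : S.Nonempty) {c : ℝ} (hc : ∀ z ∈ S, f z = c)
    {m n : ℕ} (hmn : m < n) :
    (Finset.Icc m n).inf' (Finset.nonempty_Icc.mpr hmn.le) (fun t => f (x t) - c) ≤
      (Metric.infDist (x m) S ^ 2 + ((n : ℝ) - m) * α ^ 2 *
        (Finset.Icc m n).sup' (Finset.nonempty_Icc.mpr hmn.le) (fun t => ‖F t‖ ^ 2)) /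
      (2 * ((n : ℝ) - m) * α) := by
  have hnm : 0 < (n : ℝ) - m := sub_pos.2 (Nat.cast_lt.2 hmn)
  rw [le_div_iff₀ (by positivity)]
  refine sub_le_iff_le_add.1 (Metric.le_infDist_sq hS fun z hz => ?_)
  have hgap := subgradient_method_inf'_gap_le hα.le hF hrec z hmn.le
  rw [hc z hz] at hgap
  rw [dist_eq_norm]
  linarith

end SubgradientMethod

theorem sInf_image_argmin_eq_of_forall_add_mul_le {α : Type*} {g h : α → ℝ} {β : ℝ} (hβ : 0 < β)
    {z : α} (hzf : ∀ y, g z + β * h z ≤ g y + β * h y) (hzg : ∀ y, g z ≤ g y) :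
    sInf (h '' {x | ∀ y, g x ≤ g y}) = h z := by
  refine IsLeast.csInf_eq ⟨⟨z, hzg, rfl⟩, ?_⟩
  rintro _ ⟨y, hy, rfl⟩
  have hgy : g y ≤ g z := hy z
  have hsum := hzf y
  exact le_of_mul_le_mul_left (by linarith) hβ

theorem subgradient_descent_gap_bound_general
    {p : ℕ} (g h : EuclideanSpace ℝ (Fin p) → ℝ)
    (G : EuclideanSpace ℝ (Fin p) → EuclideanSpace ℝ (Fin p))
    (hgconv : ConvexOn ℝ Set.univ g)
    (hgrad : ∀ x, HasGradientAt g (G x) x)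
    (β : ℝ) (hβ : 0 < β)
    (f : EuclideanSpace ℝ (Fin p) → ℝ) (hf : ∀ x, f x = g x + β * h x)
    (Θf Θg : Set (EuclideanSpace ℝ (Fin p)))
    (hΘf : Θf = {x | ∀ y, f x ≤ f y}) (hΘg : Θg = {x | ∀ y, g x ≤ g y})
    (hΘf_ne : Θf.Nonempty)
    (fstar hgs : ℝ) (hfstar : fstar = sInf (Set.range f)) (hhgs : hgs = sInf (h '' Θg))
    (α : ℝ) (hα : 0 < α)
    (x H : ℕ → EuclideanSpace ℝ (Fin p))
    (hH : ∀ t, IsSubgradientAt h (H t) (x t))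
    (F : ℕ → EuclideanSpace ℝ (Fin p)) (hF : ∀ t, F t = G (x t) + β • H t)
    (hrec : ∀ t, x (t + 1) = x t - α • F t) :
    ∀ t₁ t₂ : ℕ, ∀ hlt : t₁ < t₂,
      ((Finset.Icc t₁ t₂).inf' (Finset.nonempty_Icc.mpr (le_of_lt hlt))
          (fun t => f (x t) - fstar) ≤
        ((Metric.infDist (x t₁) Θf) ^ 2 + ((t₂ : ℝ) - (t₁ : ℝ)) * α ^ 2 *
            ((Finset.Icc t₁ t₂).sup' (Finset.nonempty_Icc.mpr (le_of_lt hlt))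
              fun t => ‖F t‖ ^ 2)) /
          (2 * ((t₂ : ℝ) - (t₁ : ℝ)) * α)) ∧
      ((Θf ∩ Θg).Nonempty →
        (β * ((Finset.Icc t₁ t₂).inf' (Finset.nonempty_Icc.mpr (le_of_lt hlt))
            (fun t => h (x t) - hgs)) ≤
          (Finset.Icc t₁ t₂).inf' (Finset.nonempty_Icc.mpr (le_of_lt hlt))
            (fun t => f (x t) - fstar)) ∧
        β * ((Finset.Icc t₁ t₂).inf' (Finset.nonempty_Icc.mpr (le_of_lt hlt))
            (fun t => h (x t) - hgs)) ≤
          ((Metric.infDist (x t₁) Θf) ^ 2 + ((t₂ : ℝ) - (t₁ : ℝ)) * α ^ 2 *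
              ((Finset.Icc t₁ t₂).sup' (Finset.nonempty_Icc.mpr (le_of_lt hlt))
                fun t => ‖F t‖ ^ 2)) /
            (2 * ((t₂ : ℝ) - (t₁ : ℝ)) * α)) := by
  subst hΘf hΘg
  have hsubgrad : ∀ t, IsSubgradientAt f (F t) (x t) := fun t => by
    rw [funext hf, hF]
    exact ((hgrad (x t)).isSubgradientAt hgconv).add_smul (hH t) hβ.le
  have hfstar_eq : ∀ z ∈ {x | ∀ y, f x ≤ f y}, f z = fstar := fun z hz => by
    have hleast : IsLeast (Set.range f) (f z) := ⟨⟨z, rfl⟩, by rintro _ ⟨y, rfl⟩; exact hz y⟩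
    rw [hfstar, hleast.csInf_eq]
  intro t₁ t₂ hlt
  have hgap := subgradient_method_inf'_gap_le_infDist hα hsubgrad hrec hΘf_ne hfstar_eq hlt
  refine ⟨hgap, ?_⟩
  rintro ⟨z, hzf, hzg⟩
  have hzf_sum : ∀ y, g z + β * h z ≤ g y + β * h y := fun y => by simpa only [hf] using hzf y
  rw [hhgs, sInf_image_argmin_eq_of_forall_add_mul_le hβ hzf_sum hzg]
  refine (fun hlow => ⟨hlow, hlow.trans hgap⟩) (Finset.le_inf' _ _ fun t ht => ?_)
  have hβh := mul_le_mul_of_nonneg_left (Finset.inf'_le (fun t => h (x t) - h z) ht) hβ.le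
  linarith [hzg (x t), hfstar_eq z hzf, hf z, hf (x t)]

/-- general optimality-gap bound for subgradient descent on `f = g + βh`. -/
theorem subgradient_descent_gap_bound
    {p : ℕ} (g h : EuclideanSpace ℝ (Fin p) → ℝ)
    (G : EuclideanSpace ℝ (Fin p) → EuclideanSpace ℝ (Fin p))
    (hg_nonneg : ∀ x, 0 ≤ g x) (hh_nonneg : ∀ x, 0 ≤ h x)
    (hgconv : ConvexOn ℝ Set.univ g) (hhconv : ConvexOn ℝ Set.univ h)
    (hgrad : ∀ x, HasGradientAt g (G x) x)
    (β : ℝ) (hβ : 0 < β)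
    (f : EuclideanSpace ℝ (Fin p) → ℝ) (hf : ∀ x, f x = g x + β * h x)
    (Θf Θg : Set (EuclideanSpace ℝ (Fin p)))
    (hΘf : Θf = {x | ∀ y, f x ≤ f y}) (hΘg : Θg = {x | ∀ y, g x ≤ g y})
    (hΘf_ne : Θf.Nonempty)
    (fstar hgs : ℝ) (hfstar : fstar = sInf (Set.range f)) (hhgs : hgs = sInf (h '' Θg))
    (α : ℝ) (hα : 0 < α)
    (x H : ℕ → EuclideanSpace ℝ (Fin p))
    (hH : ∀ t, IsSubgradientAt h (H t) (x t))
    (F : ℕ → EuclideanSpace ℝ (Fin p)) (hF : ∀ t, F t = G (x t) + β • H t)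
    (hrec : ∀ t, x (t + 1) = x t - α • F t) :
    ∀ t₁ t₂ : ℕ, ∀ hlt : t₁ < t₂,
      ((Finset.Icc t₁ t₂).inf' (Finset.nonempty_Icc.mpr (le_of_lt hlt))
          (fun t => f (x t) - fstar) ≤
        ((Metric.infDist (x t₁) Θf) ^ 2 + ((t₂ : ℝ) - (t₁ : ℝ)) * α ^ 2 *
            ((Finset.Icc t₁ t₂).sup' (Finset.nonempty_Icc.mpr (le_of_lt hlt))
              fun t => ‖F t‖ ^ 2)) /
          (2 * ((t₂ : ℝ) - (t₁ : ℝ)) * α)) ∧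
      ((Θf ∩ Θg).Nonempty →
        (β * ((Finset.Icc t₁ t₂).inf' (Finset.nonempty_Icc.mpr (le_of_lt hlt))
            (fun t => h (x t) - hgs)) ≤
          (Finset.Icc t₁ t₂).inf' (Finset.nonempty_Icc.mpr (le_of_lt hlt))
            (fun t => f (x t) - fstar)) ∧
        β * ((Finset.Icc t₁ t₂).inf' (Finset.nonempty_Icc.mpr (le_of_lt hlt))
            (fun t => h (x t) - hgs)) ≤
          ((Metric.infDist (x t₁) Θf) ^ 2 + ((t₂ : ℝ) - (t₁ : ℝ)) * α ^ 2 *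
              ((Finset.Icc t₁ t₂).sup' (Finset.nonempty_Icc.mpr (le_of_lt hlt))
                fun t => ‖F t‖ ^ 2)) /
            (2 * ((t₂ : ℝ) - (t₁ : ℝ)) * α)) :=
  subgradient_descent_gap_bound_general g h G hgconv hgrad β hβ f hf Θf Θg hΘf hΘg hΘf_ne fstar hgs
    hfstar hhgs α hα x H hH F hF hrec
end

section
/- In the sparse recovery setup, assume: 0 < α·σ_max(XᵀX) < 2; 0 < β·√n < σ_max(XᵀX); ρ₂ < 1; and ‖Xᵀξ‖₂ ≤ √(Cα)·β for some constant C > 0. Then there exist t₁ ∈ ℕ and C' > 0 such that: (i) for every t ≥ t₁, ‖a^{(t)} − â‖₂ ≤ 2αβ√n/(1 − ρ₂) and g(a^{(t)}) ≤ g(â) + 2nα²β²σ_max(X)²/(1 − ρ₂)², where moreover g(â) ≤ (1/2)‖ξ‖₂²; and (ii) for every η > 0 and every integer t₂ ≥ t₁ + ‖a^{(t₁)} − a*‖₂²/(αβη): min_{t₁ ≤ t ≤ t₂} (f(a^{(t)}) − f(a*)) ≤ (η + C'αβ)β/2 and min_{t₁ ≤ t ≤ t₂} (‖a^{(t)}‖₁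 − ‖a*‖₁) ≤ (η + (C + C')αβ)/2. -/
open Matrix

/-- Euclidean (ℓ2) norm of a vector in `ℝ^k`. -/
noncomputable def l2 {k : ℕ} (v : Fin k → ℝ) : ℝ := Real.sqrt (∑ i, (v i) ^ 2)

/-- ℓ1 norm of a vector in `ℝ^k`. -/
def l1 {k : ℕ} (v : Fin k → ℝ) : ℝ := ∑ i, |v i|

/-- Largest singular value of a matrix, i.e. its Euclidean operator norm. -/
noncomputable def smax {m k : ℕ} (A : Matrix (Fin m) (Fin k) ℝ) : ℝ :=
  ‖LinearMap.toContinuousLinearMap (Matrix.toEuclideanLin A)‖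

/-!
With `M = XᵀX`, the normal equations give `∇g(a) = M (a - â)`, so the error `e_t = a_t - â`
satisfies `e_{t+1} = (1 - αM) e_t - αβ H_t`, and `‖H_t‖₂ ≤ √n` because every coordinate of an
ℓ1-subgradient lies in `[-1, 1]`. Hence `‖e_{t+1}‖ ≤ ρ₂ ‖e_t‖ + αβ√n`: the error drops by `αβ√n`
per step until it is at most `R = 2αβ√n / (1 - ρ₂)`, and then stays below `R`. The bound on `g`
follows from `g(a) = g(â) + ½‖X(a - â)‖²`.

From then on the subgradients `s_t = ∇g(a_t) + βH_t` are bounded by `K = σ_max(M) R + β√n`, and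
the classical estimate `‖a_{t+1} - a*‖² ≤ ‖a_t - a*‖² - 2α (f(a_t) - f(a*)) + α²K²` forces
`f(a_t) - f(a*) ≤ (βη + αK²)/2` somewhere in every window of `‖a_{t₁} - a*‖² / (αβη)` steps.
The ℓ1-gap follows, since `g(a*) - g(â) ≤ α ‖Xᵀξ‖² / (2 (1 - ρ₂)) ≤ Cα²β² / (2 (1 - ρ₂))`.
-/

theorem exists_forall_le_of_le_mul_add {u : ℕ → ℝ} {ρ D : ℝ} {t₀ : ℕ} (hρ₀ : 0 ≤ ρ)
    (hρ : ρ < 1) (hD : 0 < D) (h : ∀ t, t₀ ≤ t → u (t + 1) ≤ ρ * u t + D) :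
    ∃ t₁, t₀ ≤ t₁ ∧ ∀ t, t₁ ≤ t → u t ≤ 2 * D / (1 - ρ) := by
  set R := 2 * D / (1 - ρ)
  have hR : (1 - ρ) * R = 2 * D := mul_div_cancel₀ _ (by linarith)
  have stay : ∀ t, t₀ ≤ t → u t ≤ R → u (t + 1) ≤ R := fun t ht hu => by
    nlinarith [h t ht, mul_le_mul_of_nonneg_left hu hρ₀]
  have drop : ∀ t, t₀ ≤ t → R < u t → u (t + 1) ≤ u t - D := fun t ht hu => by
    nlinarith [h t ht, mul_le_mul_of_nonneg_left hu.le (sub_nonneg.2 hρ.le)]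
  obtain ⟨t₁, ht₁, hu₁⟩ : ∃ t₁, t₀ ≤ t₁ ∧ u t₁ ≤ R := by
    by_contra! above
    have descent : ∀ k : ℕ, u (t₀ + k) ≤ u t₀ - k * D := by
      intro k
      induction k with
      | zero => simp
      | succ k ih =>
        have := drop (t₀ + k) (by omega) (above _ (by omega))
        rw [← add_assoc]
        push_cast
        linarith
    obtain ⟨k, hk⟩ := exists_nat_gt ((u t₀ - R) / D)
    rw [div_lt_iff₀ hD] at hk
    linarith [descent k, above (t₀ + k) (by omega)]
  refine ⟨t₁, ht₁, fun t ht => ?_⟩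
  induction t, ht using Nat.le_induction with
  | base => exact hu₁
  | succ t ht ih => exact stay t (by omega) ih

theorem exists_le_of_le_sub_mul_add {d c : ℕ → ℝ} {α G ε : ℝ} {t₁ t₂ : ℕ} (hα : 0 < α)
    (hε : 0 < ε) (hd : ∀ t, 0 ≤ d t)
    (h : ∀ t, t₁ ≤ t → d (t + 1) ≤ d t - 2 * α * c t + α ^ 2 * G)
    (ht₂ : (t₁ : ℝ) + d t₁ / (α * ε) ≤ t₂) :
    ∃ t, t₁ ≤ t ∧ t ≤ t₂ ∧ c t ≤ (ε + α * G) / 2 := by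
  have hαε : 0 < α * ε := mul_pos hα hε
  have ht : (t₁ : ℝ) ≤ t₂ := by linarith [div_nonneg (hd t₁) hαε.le]
  have ht' : t₁ ≤ t₂ := by exact_mod_cast ht
  by_contra! large
  have descent : ∀ k : ℕ, k ≤ t₂ + 1 - t₁ → d (t₁ + k) ≤ d t₁ - k * (α * ε) := by
    intro k hk
    induction k with
    | zero => simp
    | succ k ih =>
      have hc := mul_lt_mul_of_pos_left (large (t₁ + k) (by omega) (by omega))
        (by positivity : 0 < 2 * α)
      have := h (t₁ + k) (by omega)
      rw [← add_assoc]
      push_cast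
      nlinarith [ih (by omega)]
  have hk := descent (t₂ + 1 - t₁) le_rfl
  rw [Nat.add_sub_cancel' (by omega), Nat.cast_sub (by omega)] at hk
  have budget : d t₁ ≤ (t₂ - t₁) * (α * ε) := (div_le_iff₀ hαε).1 (by linarith)
  push_cast at hk
  nlinarith [hd (t₂ + 1)]

section l2

variable {k : ℕ}

theorem l2_eq_norm (v : Fin k → ℝ) : l2 v = ‖WithLp.toLp 2 v‖ := by
  simp [l2, EuclideanSpace.norm_eq, sq_abs]

theorem l2_nonneg (v : Fin k → ℝ) : 0 ≤ l2 v := Real.sqrt_nonneg _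

theorem l2_sq (v : Fin k → ℝ) : l2 v ^ 2 = v ⬝ᵥ v := by
  rw [l2_eq_norm, ← real_inner_self_eq_norm_sq, EuclideanSpace.inner_toLp_toLp]
  simp

theorem l2_add_le (u v : Fin k → ℝ) : l2 (u + v) ≤ l2 u + l2 v := by
  simpa only [l2_eq_norm, WithLp.toLp_add] using norm_add_le _ _

theorem l2_smul (c : ℝ) (v : Fin k → ℝ) : l2 (c • v) = |c| * l2 v := by
  simp only [l2_eq_norm, WithLp.toLp_smul, norm_smul, Real.norm_eq_abs]

theorem l2_neg (v : Fin k → ℝ) : l2 (-v) = l2 v := by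
  simpa using l2_smul (-1) v

theorem l2_eq_zero {v : Fin k → ℝ} : l2 v = 0 ↔ v = 0 := by
  simp [l2_eq_norm]

theorem dotProduct_le_l2_mul_l2 (u v : Fin k → ℝ) : u ⬝ᵥ v ≤ l2 u * l2 v := by
  have h := real_inner_le_norm (WithLp.toLp 2 u) (WithLp.toLp 2 v)
  rwa [EuclideanSpace.inner_toLp_toLp, star_trivial, dotProduct_comm, ← l2_eq_norm,
    ← l2_eq_norm] at h

theorem l2_le_sqrt_of_abs_le_one {v : Fin k → ℝ} (hv : ∀ i, |v i| ≤ 1) : l2 v ≤ Real.sqrt k := by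
  refine Real.sqrt_le_sqrt ?_
  calc ∑ i, v i ^ 2 ≤ ∑ _i : Fin k, (1 : ℝ) :=
        Finset.sum_le_sum fun i _ => (sq_le_one_iff_abs_le_one _).2 (hv i)
    _ = k := by simp

theorem smax_nonneg {m : ℕ} (A : Matrix (Fin m) (Fin k) ℝ) : 0 ≤ smax A := norm_nonneg _

theorem l2_mulVec_le {m : ℕ} (A : Matrix (Fin m) (Fin k) ℝ) (v : Fin k → ℝ) :
    l2 (A *ᵥ v) ≤ smax A * l2 v := by
  rw [l2_eq_norm, l2_eq_norm]
  exact (toEuclideanLin A).toContinuousLinearMap.le_opNorm _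

theorem l2_sub_sq (u v : Fin k → ℝ) : l2 (u - v) ^ 2 = l2 u ^ 2 - 2 * (u ⬝ᵥ v) + l2 v ^ 2 := by
  simp only [l2_sq, sub_dotProduct, dotProduct_sub, dotProduct_comm v u]
  ring

theorem l2_add_sq (u v : Fin k → ℝ) : l2 (u + v) ^ 2 = l2 u ^ 2 + 2 * (u ⬝ᵥ v) + l2 v ^ 2 := by
  simp only [l2_sq, add_dotProduct, dotProduct_add, dotProduct_comm v u]
  ring

def IsL1Subgradient (x h : Fin k → ℝ) : Prop :=
  ∀ b, l1 x + ∑ i, h i * (b i - x i) ≤ l1 b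

theorem IsL1Subgradient.dotProduct_le_l1 {x h : Fin k → ℝ} (hh : IsL1Subgradient x h)
    (v : Fin k → ℝ) : h ⬝ᵥ v ≤ l1 v := by
  have := hh (x + v)
  have tri : l1 (x + v) ≤ l1 x + l1 v := by
    rw [l1, l1, l1, ← Finset.sum_add_distrib]
    exact Finset.sum_le_sum fun i _ => abs_add_le (x i) (v i)
  simp only [Pi.add_apply, add_sub_cancel_left] at this
  exact le_of_add_le_add_left (this.trans tri)

theorem IsL1Subgradient.abs_le_one {x h : Fin k → ℝ} (hh : IsL1Subgradient x h) (i : Fin k) :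
    |h i| ≤ 1 := by
  have single (c : ℝ) : h i * c ≤ |c| := by
    simpa [dotProduct_single, l1, Pi.single_apply, apply_ite] using
      hh.dotProduct_le_l1 (Pi.single i c)
  have h₁ := single 1
  have h₂ := single (-1)
  norm_num at h₁ h₂
  exact abs_le.2 ⟨by linarith, h₁⟩

theorem IsL1Subgradient.l2_le_sqrt {x h : Fin k → ℝ} (hh : IsL1Subgradient x h) :
    l2 h ≤ Real.sqrt k :=
  l2_le_sqrt_of_abs_le_one hh.abs_le_one

theorem l2_sub_smul_sub_sq_le {F : (Fin k → ℝ) → ℝ} {x x' s : Fin k → ℝ} {α : ℝ} (hα : 0 ≤ α)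
    (hs : F x + s ⬝ᵥ (x' - x) ≤ F x') :
    l2 (x - α • s - x') ^ 2 ≤ l2 (x - x') ^ 2 - 2 * α * (F x - F x') + α ^ 2 * l2 s ^ 2 := by
  have hs' : F x - F x' ≤ s ⬝ᵥ (x - x') := by
    rw [← neg_sub x x', dotProduct_neg] at hs
    linarith
  rw [sub_right_comm, l2_sub_sq, l2_smul, mul_pow, sq_abs, dotProduct_smul, dotProduct_comm,
    smul_eq_mul]
  nlinarith

end l2

theorem one_sub_smax_mul_l2_le {n : ℕ} (A : Matrix (Fin n) (Fin n) ℝ) (α : ℝ) (w : Fin n → ℝ) :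
    (1 - smax (1 - α • A)) * l2 w ≤ |α| * l2 (A *ᵥ w) := by
  have hw : w = (1 - α • A) *ᵥ w + α • (A *ᵥ w) := by
    rw [sub_mulVec, one_mulVec, smul_mulVec, sub_add_cancel]
  have := (l2_add_le _ _).trans (add_le_add (l2_mulVec_le (1 - α • A) w) (l2_smul α (A *ᵥ w)).le)
  rw [← hw] at this
  linarith

theorem isUnit_det_of_smax_one_sub_smul_lt_one {n : ℕ} {A : Matrix (Fin n) (Fin n) ℝ} {α : ℝ}
    (h : smax (1 - α • A) < 1) : IsUnit A.det := by
  rw [← isUnit_iff_isUnit_det, ← mulVec_injective_iff_isUnit]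
  intro w w' hww'
  have := one_sub_smax_mul_l2_le A α (w - w')
  rw [mulVec_sub, hww', sub_self, l2_eq_zero.2 rfl, mul_zero] at this
  have hzero : l2 (w - w') = 0 :=
    le_antisymm (nonpos_of_mul_nonpos_right this (by linarith)) (l2_nonneg _)
  exact sub_eq_zero.1 (l2_eq_zero.1 hzero)

section LeastSquares

variable {N n : ℕ} (X : Matrix (Fin N) (Fin n) ℝ) (y : Fin N → ℝ)

noncomputable def lsq (v : Fin n → ℝ) : ℝ := 1 / 2 * l2 (X *ᵥ v - y) ^ 2

theorem lsq_eq_add (v b : Fin n → ℝ) :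
    lsq X y b = lsq X y v + (Xᵀ *ᵥ (X *ᵥ v - y)) ⬝ᵥ (b - v) + 1 / 2 * l2 (X *ᵥ (b - v)) ^ 2 := by
  have hb : X *ᵥ b - y = (X *ᵥ v - y) + X *ᵥ (b - v) := by
    rw [mulVec_sub]
    abel
  rw [lsq, lsq, hb, l2_add_sq, mulVec_transpose, dotProduct_mulVec]
  ring

theorem lsq_add_le (v b : Fin n → ℝ) :
    lsq X y v + (Xᵀ *ᵥ (X *ᵥ v - y)) ⬝ᵥ (b - v) ≤ lsq X y b := by
  rw [lsq_eq_add X y v b]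
  nlinarith [sq_nonneg (l2 (X *ᵥ (b - v)))]

theorem lsq_eq_of_eq_add {x : Fin n → ℝ} {ξ : Fin N → ℝ} (hy : y = X *ᵥ x + ξ) :
    lsq X y x = 1 / 2 * l2 ξ ^ 2 := by
  rw [lsq, hy, sub_add_cancel_left, l2_neg]

theorem transpose_mulVec_sub_eq_zero (hX : IsUnit (Xᵀ * X).det) :
    Xᵀ *ᵥ (X *ᵥ ((Xᵀ * X)⁻¹ *ᵥ (Xᵀ *ᵥ y)) - y) = 0 := by
  rw [mulVec_sub, mulVec_mulVec, mulVec_mulVec, mul_nonsing_inv _ hX, one_mulVec, sub_self]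

theorem lsq_add_smul_l1_add_le {β : ℝ} (hβ : 0 ≤ β) {x h : Fin n → ℝ}
    (hh : IsL1Subgradient x h) (b : Fin n → ℝ) :
    lsq X y x + β * l1 x + (Xᵀ *ᵥ (X *ᵥ x - y) + β • h) ⬝ᵥ (b - x) ≤ lsq X y b + β * l1 b := by
  have hl1 : l1 x + h ⬝ᵥ (b - x) ≤ l1 b := hh b
  rw [add_dotProduct, smul_dotProduct, smul_eq_mul]
  nlinarith [lsq_add_le X y x b, mul_le_mul_of_nonneg_left hl1 hβ]

variable {X y} {â : Fin n → ℝ} (hâ : Xᵀ *ᵥ (X *ᵥ â - y) = 0)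
include hâ

theorem transpose_mulVec_sub_eq (v : Fin n → ℝ) :
    Xᵀ *ᵥ (X *ᵥ v - y) = (Xᵀ * X) *ᵥ (v - â) := by
  rw [← mulVec_mulVec, mulVec_sub X, ← sub_zero (Xᵀ *ᵥ (X *ᵥ v - y)), ← hâ, ← mulVec_sub]
  congr 1
  abel

theorem lsq_eq_lsq_add (b : Fin n → ℝ) : lsq X y b = lsq X y â + 1 / 2 * l2 (X *ᵥ (b - â)) ^ 2 := by
  rw [lsq_eq_add X y â b, hâ, zero_dotProduct, add_zero]

theorem lsq_le_lsq (b : Fin n → ℝ) : lsq X y â ≤ lsq X y b := by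
  rw [lsq_eq_lsq_add hâ b]
  nlinarith [sq_nonneg (l2 (X *ᵥ (b - â)))]

theorem lsq_le_of_l2_sub_le {b : Fin n → ℝ} {R : ℝ} (hb : l2 (b - â) ≤ R) :
    lsq X y b ≤ lsq X y â + 1 / 2 * (smax X * R) ^ 2 := by
  have := (l2_mulVec_le X (b - â)).trans (mul_le_mul_of_nonneg_left hb (smax_nonneg X))
  rw [lsq_eq_lsq_add hâ b]
  gcongr
  exact l2_nonneg _

theorem lsq_sub_lsq_le {α : ℝ} (hα : 0 < α) (hρ : smax (1 - α • (Xᵀ * X)) < 1) (b : Fin n → ℝ) :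
    lsq X y b - lsq X y â ≤
      α * l2 (Xᵀ *ᵥ (X *ᵥ b - y)) ^ 2 / (2 * (1 - smax (1 - α • (Xᵀ * X)))) := by
  set u := Xᵀ *ᵥ (X *ᵥ b - y)
  have hu : (Xᵀ * X) *ᵥ (b - â) = u := (transpose_mulVec_sub_eq hâ b).symm
  have hw := one_sub_smax_mul_l2_le (Xᵀ * X) α (b - â)
  rw [hu, abs_of_pos hα] at hw
  have hXw : l2 (X *ᵥ (b - â)) ^ 2 ≤ l2 u * l2 (b - â) := by
    rw [l2_sq, dotProduct_mulVec, ← mulVec_transpose, mulVec_mulVec, hu]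
    exact dotProduct_le_l2_mul_l2 _ _
  rw [lsq_eq_lsq_add hâ b, le_div_iff₀ (by linarith)]
  nlinarith [l2_nonneg u]

theorem lsq_sub_lsq_le_of_eq_add {α : ℝ} (hα : 0 < α) (hρ : smax (1 - α • (Xᵀ * X)) < 1)
    {x : Fin n → ℝ} {ξ : Fin N → ℝ} (hy : y = X *ᵥ x + ξ) {G : ℝ} (hξ : l2 (Xᵀ *ᵥ ξ) ≤ G) :
    lsq X y x - lsq X y â ≤ α * G ^ 2 / (2 * (1 - smax (1 - α • (Xᵀ * X)))) := by
  refine (lsq_sub_lsq_le hâ hα hρ x).trans ?_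
  rw [hy, sub_add_cancel_left, mulVec_neg, l2_neg]
  gcongr
  exact l2_nonneg _

theorem l2_gradient_step_sub_le (v h : Fin n → ℝ) (α β : ℝ) :
    l2 (v - α • (Xᵀ *ᵥ (X *ᵥ v - y) + β • h) - â) ≤
      smax (1 - α • (Xᵀ * X)) * l2 (v - â) + |α * β| * l2 h := by
  have hstep : v - α • (Xᵀ *ᵥ (X *ᵥ v - y) + β • h) - â
      = (1 - α • (Xᵀ * X)) *ᵥ (v - â) + (-(α * β)) • h := by
    rw [transpose_mulVec_sub_eq hâ v, sub_mulVec, one_mulVec, smul_mulVec, smul_add, smul_smul]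
    simp only [neg_smul]
    abel
  rw [hstep]
  refine (l2_add_le _ _).trans (add_le_add (l2_mulVec_le _ _) ?_)
  rw [l2_smul, abs_neg]

end LeastSquares

section Dynamics

variable {N n : ℕ} {X : Matrix (Fin N) (Fin n) ℝ} {y : Fin N → ℝ} {â : Fin n → ℝ} {α β : ℝ}
  {a H : ℕ → Fin n → ℝ}
  (hâ : Xᵀ *ᵥ (X *ᵥ â - y) = 0)
  (hH : ∀ t, 1 ≤ t → IsL1Subgradient (a t) (H t))
  (hrec : ∀ t, 1 ≤ t → a (t + 1) = a t - α • (Xᵀ *ᵥ (X *ᵥ a t - y) + β • H t))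
include hâ hH hrec

theorem exists_forall_l2_sub_le (hα : 0 < α) (hβ : 0 < β * Real.sqrt n)
    (hρ : smax (1 - α • (Xᵀ * X)) < 1) :
    ∃ t₁, 1 ≤ t₁ ∧ ∀ t, t₁ ≤ t →
      l2 (a t - â) ≤ 2 * α * β * Real.sqrt n / (1 - smax (1 - α • (Xᵀ * X))) := by
  have hβ₀ : 0 < β := pos_of_mul_pos_left hβ (Real.sqrt_nonneg _)
  have hstep : ∀ t, 1 ≤ t →
      l2 (a (t + 1) - â) ≤ smax (1 - α • (Xᵀ * X)) * l2 (a t - â) + α * β * Real.sqrt n := by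
    intro t ht
    rw [hrec t ht]
    refine (l2_gradient_step_sub_le hâ _ _ α β).trans (add_le_add le_rfl ?_)
    rw [abs_of_pos (mul_pos hα hβ₀)]
    exact mul_le_mul_of_nonneg_left (hH t ht).l2_le_sqrt (by positivity)
  have hD : 0 < α * β * Real.sqrt n := by rw [mul_assoc]; exact mul_pos hα hβ
  obtain ⟨t₁, ht₁, hle⟩ := exists_forall_le_of_le_mul_add (u := fun t => l2 (a t - â))
    (smax_nonneg _) hρ hD hstep
  exact ⟨t₁, ht₁, fun t ht => (hle t ht).trans_eq (by ring)⟩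

theorem exists_lsq_add_l1_sub_le (hα : 0 < α) (hβ : 0 < β) {t₁ : ℕ} (ht₁ : 1 ≤ t₁) {R : ℝ}
    (hR : ∀ t, t₁ ≤ t → l2 (a t - â) ≤ R) (x : Fin n → ℝ) {η : ℝ} (hη : 0 < η) {t₂ : ℕ}
    (ht₂ : (t₁ : ℝ) + l2 (a t₁ - x) ^ 2 / (α * β * η) ≤ t₂) :
    ∃ t, t₁ ≤ t ∧ t ≤ t₂ ∧ lsq X y (a t) + β * l1 (a t) - (lsq X y x + β * l1 x) ≤
      (β * η + α * (smax (Xᵀ * X) * R + β * Real.sqrt n) ^ 2) / 2 := by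
  have hstep : ∀ t, t₁ ≤ t → l2 (a (t + 1) - x) ^ 2 ≤ l2 (a t - x) ^ 2
      - 2 * α * (lsq X y (a t) + β * l1 (a t) - (lsq X y x + β * l1 x))
      + α ^ 2 * (smax (Xᵀ * X) * R + β * Real.sqrt n) ^ 2 := by
    intro t ht
    have hgrad : l2 (Xᵀ *ᵥ (X *ᵥ a t - y) + β • H t) ≤ smax (Xᵀ * X) * R + β * Real.sqrt n := by
      rw [transpose_mulVec_sub_eq hâ]
      refine (l2_add_le _ _).trans (add_le_add ?_ ?_)
      · exact (l2_mulVec_le _ _).trans (mul_le_mul_of_nonneg_left (hR t ht) (smax_nonneg _))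
      · rw [l2_smul, abs_of_pos hβ]
        exact mul_le_mul_of_nonneg_left (hH t (by omega)).l2_le_sqrt hβ.le
    rw [hrec t (by omega)]
    refine (l2_sub_smul_sub_sq_le (F := fun v => lsq X y v + β * l1 v) hα.le
      (lsq_add_smul_l1_add_le X y hβ.le (hH t (by omega)) x)).trans ?_
    gcongr
    exact l2_nonneg _
  refine exists_le_of_le_sub_mul_add (d := fun t => l2 (a t - x) ^ 2) hα (mul_pos hβ hη)
    (fun _ => sq_nonneg _) hstep ?_
  rwa [← mul_assoc]

end Dynamics

theorem sparse_recovery_grokking_general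
    {N n : ℕ} (X : Matrix (Fin N) (Fin n) ℝ)
    (astar : Fin n → ℝ) (ξ : Fin N → ℝ)
    (ystar : Fin N → ℝ) (hystar : ystar = X.mulVec astar + ξ)
    (gf : (Fin n → ℝ) → ℝ) (hgf : ∀ v, gf v = (1 / 2) * (l2 (X.mulVec v - ystar)) ^ 2)
    (α β : ℝ)
    (f : (Fin n → ℝ) → ℝ) (hfdef : ∀ v, f v = gf v + β * l1 v)
    (hα : 0 < α * smax (Xᵀ * X))
    (hβ : 0 < β * Real.sqrt n)
    (ρ₂ : ℝ) (hρ₂def : ρ₂ = smax ((1 : Matrix (Fin n) (Fin n) ℝ) - α • (Xᵀ * X)))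
    (hρ₂ : ρ₂ < 1)
    (C : ℝ) (hC : 0 < C) (hξ : l2 (Xᵀ.mulVec ξ) ≤ Real.sqrt (C * α) * β)
    (ahat : Fin n → ℝ) (hahat : ahat = (Xᵀ * X)⁻¹.mulVec (Xᵀ.mulVec ystar))
    (a H : ℕ → (Fin n → ℝ))
    (hH : ∀ t, 1 ≤ t → ∀ b : Fin n → ℝ, l1 (a t) + ∑ i, H t i * (b i - a t i) ≤ l1 b)
    (hrec : ∀ t, 1 ≤ t →
      a (t + 1) = a t - α • (Xᵀ.mulVec (X.mulVec (a t) - ystar) + β • H t)) :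
    ∃ t₁ : ℕ, 1 ≤ t₁ ∧ ∃ C' : ℝ, 0 < C' ∧
      gf ahat ≤ (1 / 2) * (l2 ξ) ^ 2 ∧
      (∀ t, t₁ ≤ t →
        l2 (a t - ahat) ≤ 2 * α * β * Real.sqrt n / (1 - ρ₂) ∧
        gf (a t) ≤ gf ahat + 2 * n * α ^ 2 * β ^ 2 * (smax X) ^ 2 / (1 - ρ₂) ^ 2) ∧
      (∀ η : ℝ, 0 < η → ∀ t₂ : ℕ,
        (t₁ : ℝ) + (l2 (a t₁ - astar)) ^ 2 / (α * β * η) ≤ (t₂ : ℝ) →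
        (∃ t, t₁ ≤ t ∧ t ≤ t₂ ∧ f (a t) - f astar ≤ (η + C' * α * β) * β / 2) ∧
        (∃ t, t₁ ≤ t ∧ t ≤ t₂ ∧ l1 (a t) - l1 astar ≤ (η + (C + C') * α * β) / 2)) := by
  obtain rfl : gf = lsq X ystar := funext hgf
  obtain rfl : f = fun v => lsq X ystar v + β * l1 v := funext hfdef
  beta_reduce
  subst hahat
  have hα₀ : 0 < α := pos_of_mul_pos_left hα (smax_nonneg _)
  have hβ₀ : 0 < β := pos_of_mul_pos_left hβ (Real.sqrt_nonneg _)
  have hρ₀ : 0 < 1 - ρ₂ := sub_pos.2 hρ₂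
  have hρ : smax (1 - α • (Xᵀ * X)) < 1 := hρ₂def ▸ hρ₂
  have hâ := transpose_mulVec_sub_eq_zero X ystar (isUnit_det_of_smax_one_sub_smul_lt_one hρ)
  have hgap := lsq_sub_lsq_le_of_eq_add hâ hα₀ hρ hystar hξ
  rw [mul_pow, Real.sq_sqrt (by positivity), ← hρ₂def] at hgap
  obtain ⟨t₁, ht₁, hR⟩ := exists_forall_l2_sub_le hâ hH hrec hα₀ hβ hρ
  rw [← hρ₂def] at hR
  set K := smax (Xᵀ * X) * (2 * α * β * Real.sqrt n / (1 - ρ₂)) + β * Real.sqrt n with hK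
  set C' := K ^ 2 / β ^ 2 + C * α / (1 - ρ₂) with hC'
  refine ⟨t₁, ht₁, C', by positivity, ?_, fun t ht => ⟨hR t ht, ?_⟩, fun η hη t₂ ht₂ => ?_⟩
  · exact (lsq_le_lsq hâ astar).trans_eq (lsq_eq_of_eq_add _ _ hystar)
  · refine (lsq_le_of_l2_sub_le hâ (hR t ht)).trans_eq ?_
    rw [mul_pow, div_pow, mul_pow, mul_pow, Real.sq_sqrt (Nat.cast_nonneg _)]
    ring
  · obtain ⟨t, ht₁t, htt₂, hf⟩ := exists_lsq_add_l1_sub_le hâ hH hrec hα₀ hβ₀ ht₁ hR astar hη ht₂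
    rw [← hK] at hf
    have hC'β : (η + C' * α * β) * β / 2
        = (β * η + α * K ^ 2) / 2 + α * (C * α * β ^ 2) / (2 * (1 - ρ₂)) := by
      rw [hC']
      field_simp
      ring
    have hgap₀ : 0 ≤ α * (C * α * β ^ 2) / (2 * (1 - ρ₂)) := by positivity
    refine ⟨⟨t, ht₁t, htt₂, by linarith⟩, ⟨t, ht₁t, htt₂, ?_⟩⟩
    rw [← mul_le_mul_iff_right₀ hβ₀]
    nlinarith [lsq_le_lsq hâ (a t), mul_pos hC (mul_pos hα₀ (pow_pos hβ₀ 2))]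

/-- two-phase dynamics of ℓ1-regularized subgradient descent for sparse
recovery: memorization near the least-squares solution `â`, then an additional
`‖a^{(t₁)} − a*‖₂²/(αβη)` steps for the `f`-gap and the ℓ1-gap to become small. -/
theorem sparse_recovery_grokking
    {N n : ℕ} (X : Matrix (Fin N) (Fin n) ℝ)
    (astar : Fin n → ℝ) (ξ : Fin N → ℝ)
    (ystar : Fin N → ℝ) (hystar : ystar = X.mulVec astar + ξ)
    (gf : (Fin n → ℝ) → ℝ) (hgf : ∀ v, gf v = (1 / 2) * (l2 (X.mulVec v - ystar)) ^ 2)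
    (α β : ℝ)
    (f : (Fin n → ℝ) → ℝ) (hfdef : ∀ v, f v = gf v + β * l1 v)
    (hα : 0 < α * smax (Xᵀ * X)) (hα2 : α * smax (Xᵀ * X) < 2)
    (hβ : 0 < β * Real.sqrt n) (hβ2 : β * Real.sqrt n < smax (Xᵀ * X))
    (ρ₂ : ℝ) (hρ₂def : ρ₂ = smax ((1 : Matrix (Fin n) (Fin n) ℝ) - α • (Xᵀ * X)))
    (hρ₂ : ρ₂ < 1)
    (C : ℝ) (hC : 0 < C) (hξ : l2 (Xᵀ.mulVec ξ) ≤ Real.sqrt (C * α) * β)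
    (ahat : Fin n → ℝ) (hahat : ahat = (Xᵀ * X)⁻¹.mulVec (Xᵀ.mulVec ystar))
    (a H : ℕ → (Fin n → ℝ))
    (hH : ∀ t, 1 ≤ t → ∀ b : Fin n → ℝ, l1 (a t) + ∑ i, H t i * (b i - a t i) ≤ l1 b)
    (hrec : ∀ t, 1 ≤ t →
      a (t + 1) = a t - α • (Xᵀ.mulVec (X.mulVec (a t) - ystar) + β • H t)) :
    ∃ t₁ : ℕ, 1 ≤ t₁ ∧ ∃ C' : ℝ, 0 < C' ∧
      gf ahat ≤ (1 / 2) * (l2 ξ) ^ 2 ∧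
      (∀ t, t₁ ≤ t →
        l2 (a t - ahat) ≤ 2 * α * β * Real.sqrt n / (1 - ρ₂) ∧
        gf (a t) ≤ gf ahat + 2 * n * α ^ 2 * β ^ 2 * (smax X) ^ 2 / (1 - ρ₂) ^ 2) ∧
      (∀ η : ℝ, 0 < η → ∀ t₂ : ℕ,
        (t₁ : ℝ) + (l2 (a t₁ - astar)) ^ 2 / (α * β * η) ≤ (t₂ : ℝ) →
        (∃ t, t₁ ≤ t ∧ t ≤ t₂ ∧ f (a t) - f astar ≤ (η + C' * α * β) * β / 2) ∧
        (∃ t, t₁ ≤ t ∧ t ≤ t₂ ∧ l1 (a t) - l1 astar ≤ (η + (C + C') * α * β) / 2)) :=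
  sparse_recovery_grokking_general X astar ξ ystar hystar gf hgf α β f hfdef hα hβ ρ₂ hρ₂def hρ₂ C
    hC hξ ahat hahat a H hH hrec
end

section
/- Fix α > 0 and n ≥ 1. Let a^{(1)} ∈ ℝⁿ and define a^{(t+1)} := a^{(t)} − α·H_t, where each H_t is a subgradient of the ℓ1-norm at a^{(t)}, i.e. (H_t)_i = sign(a^{(t)}_i) whenever a^{(t)}_i ≠ 0 and (H_t)_i ∈ [−1, 1] whenever a^{(t)}_i = 0. Then: (i) ‖a^{(t)}‖_∞ ≤ α for every integer t > ⌊‖a^{(1)}‖_∞/α⌋; and (ii) if every H_t is the coordinatewise sign (with sign(0) = 0), then for each coordinate i with a^{(1)}_i/α ∈ ℤ one has a^{(t)}_i = 0 for all t > ⌊|a^{(1)}_i|/α⌋; in particular, if a^{(1)}_i/α ∈ ℤ for every i, then a^{(t)} = 0 for all t > ⌊‖a^{(1)}‖_∞/α⌋. -/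
lemma step_abs' (α : ℝ) (hα : 0 < α) (x h : ℝ)
    (h1 : x ≠ 0 → h = Real.sign x) (h2 : x = 0 → |h| ≤ 1) :
    |x - α * h| ≤ max (|x| - α) α := by
  rcases lt_trichotomy x 0 with hx | hx | hx
  · rw [h1 hx.ne, Real.sign_of_neg hx]
    rcases le_or_gt (-α) x with hc | hc
    · refine le_max_of_le_right ?_
      rw [abs_le]; constructor <;> nlinarith
    · refine le_max_of_le_left ?_
      rw [abs_of_neg hx, abs_of_neg (by nlinarith : x - α * (-1) < 0)]
      nlinarith
  · subst hx
    refine le_max_of_le_right ?_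
    have := h2 rfl
    have h3 := abs_nonneg h
    calc |0 - α * h| = α * |h| := by
          rw [zero_sub, abs_neg, abs_mul, abs_of_pos hα]
      _ ≤ α * 1 := by nlinarith
      _ = α := mul_one α
  · rw [h1 hx.ne', Real.sign_of_pos hx]
    rcases le_or_gt x α with hc | hc
    · refine le_max_of_le_right ?_
      rw [abs_le]; constructor <;> nlinarith
    · refine le_max_of_le_left ?_
      rw [abs_of_pos hx, abs_of_pos (by nlinarith : 0 < x - α * 1)]
      nlinarith

lemma step_lattice' (α : ℝ) (hα : 0 < α) (k : ℤ) (x : ℝ) (hx : x = (k : ℝ) * α) :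
    (∃ k' : ℤ, x - α * Real.sign x = (k' : ℝ) * α) ∧
    |x - α * Real.sign x| ≤ max (|x| - α) 0 := by
  rcases lt_trichotomy x 0 with h | h | h
  · have hk : k ≤ -1 := by
      by_contra hk
      push_neg at hk
      have : (0:ℝ) ≤ (k:ℝ) := by exact_mod_cast (by omega : (0:ℤ) ≤ k)
      nlinarith
    have hkr : (k:ℝ) ≤ -1 := by exact_mod_cast hk
    rw [Real.sign_of_neg h]
    refine ⟨⟨k + 1, by push_cast [hx]; ring⟩, ?_⟩
    rw [abs_of_nonpos (by nlinarith), abs_of_neg h]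
    have := le_max_left (-x - α) (0:ℝ)
    linarith
  · refine ⟨⟨0, by simp [h]⟩, ?_⟩
    simp [h, le_max_right]
  · have hk : 1 ≤ k := by
      by_contra hk
      push_neg at hk
      have : (k:ℝ) ≤ 0 := by exact_mod_cast (by omega : k ≤ (0:ℤ))
      nlinarith
    have hkr : (1:ℝ) ≤ (k:ℝ) := by exact_mod_cast hk
    rw [Real.sign_of_pos h]
    refine ⟨⟨k - 1, by push_cast [hx]; ring⟩, ?_⟩
    rw [abs_of_nonneg (by nlinarith), abs_of_pos h]
    have := le_max_left (x - α) (0:ℝ)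
    linarith

theorem l1_subgradient_flow_reaches_ball
    {n : ℕ} (hn : 1 ≤ n) (α : ℝ) (hα : 0 < α)
    (a H : ℕ → (Fin n → ℝ))
    (hH : ∀ t, 1 ≤ t → ∀ i, (a t i ≠ 0 → H t i = Real.sign (a t i)) ∧
      (a t i = 0 → |H t i| ≤ 1))
    (hrec : ∀ t, 1 ≤ t → a (t + 1) = a t - α • H t) :
    (∀ t : ℕ, (⌊‖a 1‖ / α⌋ : ℤ) < (t : ℤ) → ‖a t‖ ≤ α) ∧
    ((∀ t, 1 ≤ t → ∀ i, H t i = Real.sign (a t i)) →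
      (∀ i, (∃ k : ℤ, a 1 i = (k : ℝ) * α) →
        ∀ t : ℕ, (⌊|a 1 i| / α⌋ : ℤ) < (t : ℤ) → a t i = 0) ∧
      ((∀ i, ∃ k : ℤ, a 1 i = (k : ℝ) * α) →
        ∀ t : ℕ, (⌊‖a 1‖ / α⌋ : ℤ) < (t : ℤ) → a t = 0)) := by
  have hreci : ∀ s : ℕ, ∀ i, a (s + 2) i = a (s + 1) i - α * H (s + 1) i := by
    intro s i
    have := hrec (s + 1) (by omega)
    rw [show s + 1 + 1 = s + 2 from rfl] at this
    rw [this]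
    simp [Pi.sub_apply, Pi.smul_apply, smul_eq_mul]
  -- invariant 1
  have key1 : ∀ s : ℕ, ∀ i, |a (s + 1) i| ≤ max (|a 1 i| - s * α) α := by
    intro s
    induction s with
    | zero => intro i; simp [le_max_left]
    | succ s ih =>
      intro i
      have hstep := step_abs' α hα (a (s + 1) i) (H (s + 1) i)
        ((hH (s + 1) (by omega) i).1) ((hH (s + 1) (by omega) i).2)
      rw [← hreci s i] at hstep
      have h1 : max (|a (s + 1) i| - α) α ≤ max (max (|a 1 i| - s * α) α - α) α := by
        have := ih i
        apply max_le _ (le_max_right _ _)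
        exact le_max_of_le_left (by linarith)
      have h2 : max (max (|a 1 i| - s * α) α - α) α ≤ max (|a 1 i| - ((s : ℝ) + 1) * α) α := by
        apply max_le _ (le_max_right _ _)
        rw [sub_le_iff_le_add]
        apply max_le
        · nlinarith [le_max_left (|a 1 i| - ((s:ℝ) + 1) * α) α]
        · nlinarith [le_max_right (|a 1 i| - ((s:ℝ) + 1) * α) α]
      push_cast
      calc |a (s + 1 + 1) i| ≤ max (|a (s + 1) i| - α) α := hstep
        _ ≤ _ := le_trans h1 h2
  have habs_le : ∀ i : Fin n, |a 1 i| ≤ ‖a 1‖ := by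
    intro i
    have := norm_le_pi_norm (a 1) i
    simpa [Real.norm_eq_abs] using this
  constructor
  · intro t ht
    have ht0 : 0 ≤ (⌊‖a 1‖ / α⌋ : ℤ) := Int.floor_nonneg.mpr (by positivity)
    have ht1 : 1 ≤ t := by omega
    obtain ⟨s, rfl⟩ : ∃ s, t = s + 1 := ⟨t - 1, by omega⟩
    have hlt : ‖a 1‖ < (s + 1 : ℕ) * α := by
      have : ‖a 1‖ / α < ((s + 1 : ℕ) : ℝ) := by
        refine lt_of_lt_of_le (Int.lt_floor_add_one _) ?_
        have h3 : (⌊‖a 1‖ / α⌋ : ℤ) + 1 ≤ ((s + 1 : ℕ) : ℤ) := by omega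
        exact_mod_cast h3
      calc ‖a 1‖ = ‖a 1‖ / α * α := by field_simp
        _ < _ := by apply mul_lt_mul_of_pos_right this hα
    rw [pi_norm_le_iff_of_nonneg hα.le]
    intro i
    rw [Real.norm_eq_abs]
    have := key1 s i
    have hle : |a 1 i| - s * α ≤ α := by
      have := habs_le i
      push_cast at hlt ⊢
      nlinarith
    exact this.trans (max_le hle le_rfl)
  · intro hsign
    have key2 : ∀ i : Fin n, (∃ k : ℤ, a 1 i = (k : ℝ) * α) →
        ∀ s : ℕ, (∃ k : ℤ, a (s + 1) i = (k : ℝ) * α) ∧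
          |a (s + 1) i| ≤ max (|a 1 i| - s * α) 0 := by
      intro i hk s
      induction s with
      | zero => exact ⟨hk, by simp [le_max_left]⟩
      | succ s ih =>
        obtain ⟨⟨k, hks⟩, hle⟩ := ih
        have hstep := step_lattice' α hα k (a (s + 1) i) hks
        have heq : a (s + 2) i = a (s + 1) i - α * Real.sign (a (s + 1) i) := by
          rw [hreci s i, hsign (s + 1) (by omega) i]
        rw [← heq] at hstep
        refine ⟨hstep.1, ?_⟩
        push_cast
        refine hstep.2.trans (max_le ?_ (le_max_right _ _))
        rcases le_total (|a 1 i| - s * α) 0 with h | h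
        · refine le_max_of_le_right ?_
          rw [max_eq_right h] at hle
          linarith
        · refine le_max_of_le_left ?_
          rw [max_eq_left h] at hle
          linarith
    have partA : ∀ i, (∃ k : ℤ, a 1 i = (k : ℝ) * α) →
        ∀ t : ℕ, (⌊|a 1 i| / α⌋ : ℤ) < (t : ℤ) → a t i = 0 := by
      intro i hk t ht
      obtain ⟨k, hks⟩ := hk
      have ht0 : 0 ≤ (⌊|a 1 i| / α⌋ : ℤ) := Int.floor_nonneg.mpr (by positivity)
      obtain ⟨s, rfl⟩ : ∃ s, t = s + 1 := ⟨t - 1, by omega⟩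
      have hfloor : (⌊|a 1 i| / α⌋ : ℤ) = |k| := by
        have : |a 1 i| / α = ((|k| : ℤ) : ℝ) := by
          rw [hks, abs_mul, abs_of_pos hα]
          push_cast
          field_simp
        rw [this, Int.floor_intCast]
      have hk2 : |k| ≤ (s : ℤ) := by
        rw [hfloor] at ht
        omega
      have hkles : |(k : ℝ)| ≤ (s : ℝ) := by exact_mod_cast hk2
      have hle : |a 1 i| - s * α ≤ 0 := by
        have h1 : |a 1 i| = |(k : ℝ)| * α := by
          rw [hks, abs_mul, abs_of_pos hα]
        nlinarith
      have hkey := (key2 i ⟨k, hks⟩ s).2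
      have h2 : |a (s + 1) i| ≤ 0 := hkey.trans (max_le hle le_rfl)
      exact abs_eq_zero.mp (le_antisymm h2 (abs_nonneg _))
    refine ⟨partA, fun hall t ht => funext fun i => ?_⟩
    show a t i = 0
    apply partA i (hall i) t
    calc (⌊|a 1 i| / α⌋ : ℤ) ≤ ⌊‖a 1‖ / α⌋ := by
          apply Int.floor_le_floor
          gcongr
          exact habs_le i
      _ < t := ht
end
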